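/- arXiv:1205.5763 — 4 statements merged into one kernel-verified Lean document; each statement's English description precedes it below -/
import Mathlib

section
/- Let I ⊆ ℝ be an interval of length 1, L ≥ 1 an integer, x ∈ 𝒵, and let N = |B_L(x)| and λ_1(ω),…,λ_N(ω) be the eigenvalues of H_{B_L(x)}(ω). Let a, b, c, P_L > 0 satisfy b ≤ min{N^{−1}·a·c², c}, and suppose that ℙ(M_x(E) ≥ a) ≤ P_L for every E ∈ I. Then there is a measurable event 𝓑 with ℙ(𝓑) ≤ b^{−1}·P_L such that for every ω ∉ 𝓑 the set {E ∈ I : M_x(E;ω) ≥ 2a} is contained in ∪_{j=1}^{N} {E ∈ ℝ : |E − λ_j(ω)| ≤ c}. -/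
/-!
Let `𝓑 = {ω : |{E ∈ I : M_x(ω, E) ≥ a}| ≥ b}`; Chebyshev's inequality and Tonelli give
`ℙ(𝓑) ≤ b⁻¹ ∫_I ℙ(M_x(E) ≥ a) dE ≤ b⁻¹ P_L`. If `M_x(ω, E) ≥ 2a` at an energy `E` at distance
more than `c` from `Σ(H)`, then `|G(x, v; E)| ≥ 2a` for some boundary point `v ≠ x`, and
`‖G(E)‖ ≤ c⁻¹` with the resolvent identity `G(E') - G(E) = (E' - E) G(E') G(E)` keeps
`|G(x, v; E')| ≥ a` for `|E' - E| ≤ b`. As the off-diagonal entries of `H` are bounded by `1`,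
`c² |G(x, v; E)| ≤ 2 (N - 1)`, so `b < 1` and these `E'` fill a part of `I` of measure `≥ b`,
which forces `ω ∈ 𝓑`.
-/

open Finset

section Defs

variable {Z : Type*}

/-- The ball `B_r(x) = {y : d(x,y) ≤ r}` of the graph metric, as a `Finset`
(using the finiteness of balls `hfin`). -/
noncomputable def zball (G : SimpleGraph Z)
    (hfin : ∀ (x : Z) (r : ℕ), {y : Z | G.dist x y ≤ r}.Finite)
    (x : Z) (r : ℕ) : Finset Z := (hfin x r).toFinset

lemma self_mem_zball (G : SimpleGraph Z)
    (hfin : ∀ (x : Z) (r : ℕ), {y : Z | G.dist x y ≤ r}.Finite)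
    (x : Z) (r : ℕ) : x ∈ zball G hfin x r := by
  simp [zball, Set.Finite.mem_toFinset, SimpleGraph.dist_self]

/-- The discrete Schrödinger operator `H_Λ = -Δ^D_Λ + V` (Dirichlet restriction to `Λ`,
with `n(x)` the number of neighbours of `x` in the whole graph), as a matrix. -/
noncomputable def Ham [DecidableEq Z] (G : SimpleGraph Z) [DecidableRel G.Adj]
    [∀ v : Z, Fintype (G.neighborSet v)]
    (V : Z → ℝ) (Λ : Finset Z) : Matrix Λ Λ ℝ := fun x y =>
  (if (x : Z) = (y : Z) then (G.degree (x : Z) : ℝ) + V (x : Z) else 0) -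
    (if G.Adj (x : Z) (y : Z) then 1 else 0)

/-- The spectrum (set of eigenvalues) of a finite-dimensional operator. -/
noncomputable def specSet {n : Type*} [Fintype n] [DecidableEq n] (H : Matrix n n ℝ) :
    Set ℝ := {E : ℝ | (H - E • (1 : Matrix n n ℝ)).det = 0}

/-- The Green function `G(x,y;E) = ⟨δ_x, (H-E)⁻¹ δ_y⟩`. -/
noncomputable def green {n : Type*} [Fintype n] [DecidableEq n] (H : Matrix n n ℝ)
    (E : ℝ) : Matrix n n ℝ := (H - E • (1 : Matrix n n ℝ))⁻¹

variable [DecidableEq Z]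

/-- The ball `B_r(w)` is `E`-nonresonant: `dist(Σ(H_{B_r(w)}), E) ≥ exp(-r^β)`. -/
noncomputable def IsNR (G : SimpleGraph Z) [DecidableRel G.Adj]
    [∀ v : Z, Fintype (G.neighborSet v)]
    (hfin : ∀ (x : Z) (r : ℕ), {y : Z | G.dist x y ≤ r}.Finite)
    (V : Z → ℝ) (β : ℝ) (w : Z) (r : ℕ) (E : ℝ) : Prop :=
  ∀ μ ∈ specSet (Ham G V (zball G hfin w r)), Real.exp (-(r : ℝ) ^ β) ≤ |μ - E|

/-- The ball `B_L(u)` is `(E,m)`-nonsingular: `E ∉ Σ(H_{B_L(u)})` and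
`C_d² L^d |G_{B_L(u)}(x,y;E)| ≤ exp(-m(1+L^{-τ}) d(x,y))` whenever `d(x,y) ≥ L^{(1+ϱ)/α}`. -/
noncomputable def IsNS (G : SimpleGraph Z) [DecidableRel G.Adj]
    [∀ v : Z, Fintype (G.neighborSet v)]
    (hfin : ∀ (x : Z) (r : ℕ), {y : Z | G.dist x y ≤ r}.Finite)
    (V : Z → ℝ) (Cd : ℝ) (d : ℕ) (α τ ϱ : ℝ) (u : Z) (L : ℕ) (E m : ℝ) : Prop :=
  E ∉ specSet (Ham G V (zball G hfin u L)) ∧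
  ∀ x y : (zball G hfin u L), ((L : ℝ) ^ ((1 + ϱ) / α) ≤ (G.dist (x : Z) (y : Z) : ℝ)) →
    Cd ^ 2 * (L : ℝ) ^ d * |green (Ham G V (zball G hfin u L)) E x y| ≤
      Real.exp (-(m * (1 + (L : ℝ) ^ (-τ))) * (G.dist (x : Z) (y : Z) : ℝ))

end Defs

open scoped ENNReal Classical

/-- `M_x(E) = max_{v ∈ ∂⁻ B_L(x)} |G_{B_L(x)}(x,v;E)|`, the maximum of the Green function
from the centre to the inner boundary of `B_L(x)`, with the convention `M_x(E) = +∞` when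
`E ∈ Σ(H_{B_L(x)})`.  A point `v ∈ B_L(x)` belongs to the inner boundary `∂⁻ B_L(x)` iff
it has a neighbour outside `B_L(x)`. -/
noncomputable def Mfn {Z : Type*} [DecidableEq Z] (G : SimpleGraph Z) [DecidableRel G.Adj]
    [∀ v : Z, Fintype (G.neighborSet v)]
    (hfin : ∀ (x : Z) (r : ℕ), {y : Z | G.dist x y ≤ r}.Finite)
    (V : Z → ℝ) (x : Z) (L : ℕ) (E : ℝ) : ℝ≥0∞ :=
  if E ∈ specSet (Ham G V (zball G hfin x L)) then ⊤
  else ⨆ (v : (zball G hfin x L)) (_ : ∃ w : Z, G.Adj (v : Z) w ∧ L < G.dist x w),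
    ENNReal.ofReal |green (Ham G V (zball G hfin x L)) E ⟨x, self_mem_zball G hfin x L⟩ v|

open scoped Matrix.Norms.L2Operator
open Matrix

lemma abs_sum_mul_le_card_mul {ι : Type*} (s : Finset ι) {f g : ι → ℝ} {r : ℝ}
    (hf : ∀ i ∈ s, |f i| ≤ 1) (hg : ∀ i ∈ s, |g i| ≤ r) :
    |∑ i ∈ s, f i * g i| ≤ #s * r := by
  refine (abs_sum_le_sum_abs _ _).trans ?_
  rw [← nsmul_eq_mul]
  refine sum_le_card_nsmul _ _ _ fun i hi => ?_
  rw [abs_mul]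
  exact (mul_le_mul (hf i hi) (hg i hi) (abs_nonneg _) zero_le_one).trans_eq (one_mul r)

lemma exists_le_of_le_iSup_iSup {α ι : Type*} [CompleteLinearOrder α] [Finite ι] [Nonempty ι]
    {P : ι → Prop} {f : ι → α} {t : α} (ht : ⊥ < t) (h : t ≤ ⨆ i, ⨆ _ : P i, f i) :
    ∃ i, P i ∧ t ≤ f i := by
  obtain ⟨i, hi⟩ := exists_eq_ciSup_of_finite (f := fun i => ⨆ _ : P i, f i)
  rw [← hi] at h
  by_cases hP : P i
  · exact ⟨i, hP, by rwa [iSup_pos hP] at h⟩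
  · rw [iSup_neg hP] at h
    exact absurd h (not_le.2 ht)

namespace Matrix

variable {m n : Type*} [Fintype m] [Fintype n] [DecidableEq n]

lemma abs_apply_le_l2_opNorm (M : Matrix m n ℝ) (i : m) (j : n) : |M i j| ≤ ‖M‖ := by
  have h := M.l2_opNorm_mulVec (EuclideanSpace.single j 1)
  calc |M i j| = ‖(EuclideanSpace.equiv m ℝ).symm (M *ᵥ Pi.single j 1) i‖ := by simp
    _ ≤ ‖(EuclideanSpace.equiv m ℝ).symm (M *ᵥ Pi.single j 1)‖ := PiLp.norm_apply_le _ i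
    _ ≤ ‖M‖ := by simpa using h

end Matrix

section GreenFunction

variable {n : Type*} [Fintype n] [DecidableEq n] {H : Matrix n n ℝ} {E c : ℝ}

lemma mem_specSet_iff_mem_spectrum : E ∈ specSet H ↔ E ∈ spectrum ℝ H := by
  rw [spectrum.mem_iff, Algebra.algebraMap_eq_smul_one, ← neg_sub, IsUnit.neg_iff,
    isUnit_iff_isUnit_det, isUnit_iff_ne_zero, not_not]
  rfl

lemma isUnit_sub_smul_one_of_notMem_specSet (h : E ∉ specSet H) :
    IsUnit (H - E • (1 : Matrix n n ℝ)) := by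
  rwa [isUnit_iff_isUnit_det, isUnit_iff_ne_zero]

lemma notMem_specSet_of_le_abs_sub (hc : 0 < c) (hgap : ∀ μ ∈ specSet H, c ≤ |E - μ|) :
    E ∉ specSet H := fun hE => by simpa [hc.not_ge] using hgap E hE

lemma norm_green_le (hH : H.IsHermitian) (hc : 0 < c)
    (hgap : ∀ μ ∈ specSet H, c ≤ |E - μ|) : ‖green H E‖ ≤ c⁻¹ := by
  have hgap' : ∀ μ ∈ spectrum ℝ H, c ≤ |μ - E| := fun μ hμ => by
    rw [abs_sub_comm]; exact hgap μ (mem_specSet_iff_mem_spectrum.2 hμ)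
  have hcfc : cfc (fun μ => (μ - E)⁻¹) H = green H E := by
    rw [cfc_inv (fun μ => μ - E) H, cfc_sub (fun μ : ℝ => μ) (fun _ => E), cfc_id' ℝ H,
      cfc_const E H, green, nonsing_inv_eq_ringInverse, Algebra.algebraMap_eq_smul_one]
    intro μ hμ h
    have := hgap' μ hμ
    rw [h, abs_zero] at this; linarith
  rw [← hcfc]
  refine norm_cfc_le (inv_nonneg.2 hc.le) fun μ hμ => ?_
  rw [norm_inv, Real.norm_eq_abs]
  exact inv_anti₀ hc (hgap' μ hμ)

lemma abs_green_apply_le (hH : H.IsHermitian) (hc : 0 < c)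
    (hgap : ∀ μ ∈ specSet H, c ≤ |E - μ|) (i j : n) : |green H E i j| ≤ c⁻¹ :=
  (abs_apply_le_l2_opNorm _ i j).trans (norm_green_le hH hc hgap)

lemma green_sub_green {E' : ℝ} (hE : E ∉ specSet H) (hE' : E' ∉ specSet H) :
    green H E' - green H E = (E' - E) • (green H E' * green H E) := by
  rw [green, green, inv_sub_inv (iff_of_true (isUnit_sub_smul_one_of_notMem_specSet hE')
    (isUnit_sub_smul_one_of_notMem_specSet hE)), sub_sub_sub_cancel_left, ← sub_smul,
    Matrix.mul_smul, Matrix.mul_one, Matrix.smul_mul]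

lemma abs_green_sub_green_le (hH : H.IsHermitian) (hc : 0 < c)
    (hgap : ∀ μ ∈ specSet H, c ≤ |E - μ|) {b E' : ℝ} (hbc : b < c) (hE' : |E' - E| ≤ b)
    (i j : n) : |green H E' i j - green H E i j| ≤ b * ((c - b)⁻¹ * c⁻¹) := by
  have hgap' : ∀ μ ∈ specSet H, c - b ≤ |E' - μ| := fun μ hμ => by
    have := abs_sub_le E E' μ
    rw [abs_sub_comm E E'] at this
    linarith [hgap μ hμ]
  have hcb : 0 < c - b := sub_pos.2 hbc
  rw [← Matrix.sub_apply, green_sub_green (notMem_specSet_of_le_abs_sub hc hgap)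
    (notMem_specSet_of_le_abs_sub hcb hgap')]
  refine (abs_apply_le_l2_opNorm _ i j).trans ?_
  rw [norm_smul, Real.norm_eq_abs]
  exact mul_le_mul hE' ((norm_mul_le _ _).trans (mul_le_mul (norm_green_le hH hcb hgap')
    (norm_green_le hH hc hgap) (norm_nonneg _) (inv_nonneg.2 hcb.le))) (norm_nonneg _)
    ((abs_nonneg _).trans hE')

lemma sq_mul_abs_green_le (hH : H.IsHermitian) (hoff : ∀ i j, i ≠ j → |H i j| ≤ 1)
    (hc : 0 < c) (hgap : ∀ μ ∈ specSet H, c ≤ |E - μ|) {x v : n} (hxv : x ≠ v) :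
    c ^ 2 * |green H E x v| ≤ 2 * (Fintype.card n - 1) := by
  set A := H - E • (1 : Matrix n n ℝ)
  set G := green H E
  have hA : IsUnit A.det := (isUnit_sub_smul_one_of_notMem_specSet
    (notMem_specSet_of_le_abs_sub hc hgap)).map detMonoidHom
  have hAG : A * G = 1 := mul_nonsing_inv A hA
  have hGA : G * A = 1 := nonsing_inv_mul A hA
  have hGc : ∀ i j, |G i j| ≤ c⁻¹ := abs_green_apply_le hH hc hgap
  have hAoff : ∀ i j, i ≠ j → |A i j| ≤ 1 := fun i j hij => by
    simpa [A, one_apply_ne hij] using hoff i j hij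
  have hcard : (#(univ.erase x) : ℝ) = Fintype.card n - 1 := by
    rw [card_erase_of_mem (mem_univ x), card_univ, Nat.cast_pred (Fintype.card_pos_iff.2 ⟨x⟩)]
  have hrow : A x x * G x v = -∑ y ∈ univ.erase x, A x y * G y v := by
    rw [eq_neg_iff_add_eq_zero, add_sum_erase univ (fun y => A x y * G y v) (mem_univ x),
      ← mul_apply, hAG, one_apply_ne hxv]
  have hcol : 1 - G x x * A x x = ∑ y ∈ univ.erase x, G x y * A y x := by
    rw [sub_eq_iff_eq_add', add_sum_erase univ (fun y => G x y * A y x) (mem_univ x),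
      ← mul_apply, hGA, one_apply_eq]
  have hrow' : |A x x| * |G x v| ≤ (Fintype.card n - 1) * c⁻¹ := by
    rw [← abs_mul, hrow, abs_neg, ← hcard]
    exact abs_sum_mul_le_card_mul _ (fun y hy => hAoff x y (ne_of_mem_erase hy).symm)
      fun y _ => hGc y v
  have hcol' : 1 - (Fintype.card n - 1) * c⁻¹ ≤ c⁻¹ * |A x x| := by
    have : |1 - G x x * A x x| ≤ (Fintype.card n - 1) * c⁻¹ := by
      rw [hcol, ← hcard]
      simp_rw [mul_comm (G x _)]
      exact abs_sum_mul_le_card_mul _ (fun y hy => hAoff y x (ne_of_mem_erase hy))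
        fun y _ => hGc x y
    have := (abs_le.1 this).2
    have : G x x * A x x ≤ c⁻¹ * |A x x| :=
      (le_abs_self _).trans ((abs_mul _ _).trans_le (by gcongr; exact hGc x x))
    linarith
  have hcinv : c * c⁻¹ = 1 := mul_inv_cancel₀ hc.ne'
  have hg : c * |G x v| ≤ 1 := by nlinarith [hGc x v]
  have hdg : c * (|A x x| * |G x v|) ≤ Fintype.card n - 1 := by nlinarith
  have hd : c - (Fintype.card n - 1) ≤ |A x x| := by nlinarith
  -- if `c ≤ 2 (N - 1)` then `c |G x v| ≤ 1` suffices; otherwise `|A x x| ≥ c / 2` and `hdg` applies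
  rcases le_total c (2 * (Fintype.card n - 1)) with hcK | hKc
  · nlinarith [abs_nonneg (G x v)]
  · nlinarith [abs_nonneg (G x v)]

lemma lt_one_of_two_mul_le_abs_green (hH : H.IsHermitian)
    (hoff : ∀ i j, i ≠ j → |H i j| ≤ 1) (hc : 0 < c) (hgap : ∀ μ ∈ specSet H, c ≤ |E - μ|)
    {x v : n} (hxv : x ≠ v) {a b : ℝ}
    (hbN : b * Fintype.card n ≤ a * c ^ 2) (hG : 2 * a ≤ |green H E x v|) : b < 1 := by
  have hN : (0 : ℝ) < Fintype.card n := Nat.cast_pos.2 (Fintype.card_pos_iff.2 ⟨x⟩)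
  have := sq_mul_abs_green_le hH hoff hc hgap hxv
  nlinarith

lemma le_abs_green_of_abs_sub_le (hH : H.IsHermitian) (hc : 0 < c)
    (hgap : ∀ μ ∈ specSet H, c ≤ |E - μ|) {x v : n} (hxv : x ≠ v) {a b E' : ℝ}
    (hbN : b * Fintype.card n ≤ a * c ^ 2) (hG : 2 * a ≤ |green H E x v|)
    (hE' : |E' - E| ≤ b) : a ≤ |green H E' x v| := by
  have hN : (2 : ℝ) ≤ Fintype.card n := by
    exact_mod_cast Fintype.one_lt_card_iff.2 ⟨x, v, hxv⟩
  have hb : 0 ≤ b := (abs_nonneg _).trans hE'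
  have hac : 2 * a * c ≤ 1 := by
    have := abs_green_apply_le hH hc hgap x v
    have : c * c⁻¹ = 1 := mul_inv_cancel₀ hc.ne'
    nlinarith
  have hbc : 4 * b ≤ c := by nlinarith
  have hdiff := abs_green_sub_green_le hH hc hgap (by linarith) hE' x v
  have hsmall : b * ((c - b)⁻¹ * c⁻¹) ≤ a := by
    rw [← mul_inv, mul_inv_le_iff₀ (by nlinarith)]
    nlinarith
  have := abs_sub_abs_le_abs_sub (green H E x v) (green H E' x v)
  rw [abs_sub_comm] at this
  linarith

end GreenFunction

section Hamiltonian

variable {Z : Type*} [DecidableEq Z] (G : SimpleGraph Z) [DecidableRel G.Adj]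
  [∀ v : Z, Fintype (G.neighborSet v)] (V : Z → ℝ)

lemma ham_isHermitian (Λ : Finset Z) : (Ham G V Λ).IsHermitian := by
  ext i j
  rcases eq_or_ne i j with rfl | hij
  · simp
  · simp [Ham, Subtype.coe_ne_coe.2 hij, Subtype.coe_ne_coe.2 hij.symm, G.adj_comm]

lemma abs_ham_apply_le_one {Λ : Finset Z} {i j : Λ} (hij : i ≠ j) : |Ham G V Λ i j| ≤ 1 := by
  rw [Ham, if_neg (Subtype.coe_ne_coe.2 hij)]
  split_ifs <;> norm_num

variable {G} (hfin : ∀ (x : Z) (r : ℕ), {y : Z | G.dist x y ≤ r}.Finite) {x : Z} {L : ℕ}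

lemma mfn_eq_iSup {E : ℝ} (hE : E ∉ specSet (Ham G V (zball G hfin x L))) :
    Mfn G hfin V x L E =
      ⨆ (v : (zball G hfin x L)) (_ : ∃ w : Z, G.Adj (v : Z) w ∧ L < G.dist x w),
        ENNReal.ofReal |green (Ham G V (zball G hfin x L)) E ⟨x, self_mem_zball G hfin x L⟩ v| :=
  if_neg hE

lemma ofReal_le_mfn_of_abs_sub_le (hL : 1 ≤ L) {a b c E : ℝ} (ha : 0 < a) (hc : 0 < c)
    (hgap : ∀ μ ∈ specSet (Ham G V (zball G hfin x L)), c ≤ |E - μ|)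
    (hbN : b * #(zball G hfin x L) ≤ a * c ^ 2)
    (hM : ENNReal.ofReal (2 * a) ≤ Mfn G hfin V x L E) :
    b < 1 ∧ ∀ E', |E' - E| ≤ b → ENNReal.ofReal a ≤ Mfn G hfin V x L E' := by
  rw [mfn_eq_iSup V hfin (notMem_specSet_of_le_abs_sub hc hgap)] at hM
  have : Nonempty (zball G hfin x L) := ⟨⟨x, self_mem_zball G hfin x L⟩⟩
  obtain ⟨v, hv, hGv⟩ := exists_le_of_le_iSup_iSup (by simpa using ha) hM
  rw [ENNReal.ofReal_le_ofReal_iff (abs_nonneg _)] at hGv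
  have hxv : (⟨x, self_mem_zball G hfin x L⟩ : zball G hfin x L) ≠ v := by
    rintro rfl
    obtain ⟨w, hxw, hLw⟩ := hv
    rw [SimpleGraph.dist_eq_one_iff_adj.2 hxw] at hLw
    omega
  rw [← Fintype.card_coe] at hbN
  refine ⟨lt_one_of_two_mul_le_abs_green (ham_isHermitian G V _)
    (fun i j => abs_ham_apply_le_one G V) hc hgap hxv hbN hGv, fun E' hE' => ?_⟩
  by_cases hE'spec : E' ∈ specSet (Ham G V (zball G hfin x L))
  · simp [Mfn, hE'spec]
  rw [mfn_eq_iSup V hfin hE'spec]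
  exact le_iSup₂_of_le v hv (ENNReal.ofReal_le_ofReal
    (le_abs_green_of_abs_sub_le (ham_isHermitian G V _) hc hgap hxv hbN hGv hE'))

end Hamiltonian

open MeasureTheory

lemma mul_measure_le_measure_prodMk_le {Ω α : Type*} [MeasurableSpace Ω] [MeasurableSpace α]
    (μ : Measure Ω) (ν : Measure α) [SFinite μ] [SFinite ν] {S : Set (Ω × α)}
    (hS : MeasurableSet S) {p : ℝ≥0∞} (hp : ∀ᵐ e ∂ν, μ ((·, e) ⁻¹' S) ≤ p) (t : ℝ≥0∞) :
    t * μ {ω | t ≤ ν (Prod.mk ω ⁻¹' S)} ≤ p * ν Set.univ :=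
  calc t * μ {ω | t ≤ ν (Prod.mk ω ⁻¹' S)}
      ≤ ∫⁻ ω, ν (Prod.mk ω ⁻¹' S) ∂μ :=
        mul_meas_ge_le_lintegral₀ (measurable_measure_prodMk_left hS).aemeasurable t
    _ = ∫⁻ e, μ ((·, e) ⁻¹' S) ∂ν := by
        rw [← Measure.prod_apply hS, Measure.prod_apply_symm hS]
    _ ≤ ∫⁻ _, p ∂ν := lintegral_mono_ae hp
    _ = p * ν Set.univ := lintegral_const p

lemma ofReal_le_volume_Icc_inter_Icc {t E b : ℝ} (hE : E ∈ Set.Icc t (t + 1)) (hb : 0 ≤ b)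
    (hb₁ : b ≤ 1) :
    ENNReal.ofReal b ≤ volume (Set.Icc t (t + 1) ∩ Set.Icc (E - b) (E + b)) := by
  rw [Set.Icc_inter_Icc, Real.volume_Icc]
  refine ENNReal.ofReal_le_ofReal (le_sub_iff_add_le.2 (le_min ?_ ?_)) <;>
    rcases max_cases t (E - b) with ⟨h, -⟩ | ⟨h, -⟩ <;> rw [h] <;> linarith [hE.1, hE.2]

theorem statement6 {Z : Type*} [DecidableEq Z] (G : SimpleGraph Z) [DecidableRel G.Adj]
    [∀ v : Z, Fintype (G.neighborSet v)]
    (hconn : G.Connected) (hcount : Countable Z)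
    (hfin : ∀ (x : Z) (r : ℕ), {y : Z | G.dist x y ≤ r}.Finite)
    {Ω : Type*} [MeasurableSpace Ω] (Pr : Measure Ω) [IsProbabilityMeasure Pr]
    (V : Z → Ω → ℝ)
    (I : Set ℝ) (t₀ : ℝ) (hI : I = Set.Icc t₀ (t₀ + 1))
    (x : Z) (L : ℕ) (hL : 1 ≤ L)
    -- joint measurability of `(ω, E) ↦ M_x(E; ω)`
    (hmeas : Measurable fun p : Ω × ℝ => Mfn G hfin (fun z => V z p.1) x L p.2)
    (a b c PL : ℝ) (ha : 0 < a) (hb : 0 < b) (hc : 0 < c) (hPL : 0 < PL)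
    (hbmin : b ≤ min ((((zball G hfin x L).card : ℝ))⁻¹ * a * c ^ 2) c)
    -- fixed-energy bound: for every `E ∈ I`, `Pr(M_x(E) ≥ a) ≤ P_L`
    (hfixed : ∀ E ∈ I,
      Pr {ω | ENNReal.ofReal a ≤ Mfn G hfin (fun z => V z ω) x L E} ≤ ENNReal.ofReal PL) :
    ∃ B : Set Ω, MeasurableSet B ∧ Pr B ≤ ENNReal.ofReal (b⁻¹ * PL) ∧
      ∀ ω ∉ B, ∀ E ∈ I,
        ENNReal.ofReal (2 * a) ≤ Mfn G hfin (fun z => V z ω) x L E →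
        ∃ μ ∈ specSet (Ham G (fun z => V z ω) (zball G hfin x L)), |E - μ| ≤ c := by
  subst hI
  set S := {p : Ω × ℝ | ENNReal.ofReal a ≤ Mfn G hfin (fun z => V z p.1) x L p.2}
  have hS : MeasurableSet S := measurableSet_le measurable_const hmeas
  set ν := volume.restrict (Set.Icc t₀ (t₀ + 1))
  refine ⟨{ω | ENNReal.ofReal b ≤ ν (Prod.mk ω ⁻¹' S)},
    measurableSet_le measurable_const (measurable_measure_prodMk_left hS), ?_, ?_⟩
  · have hmarkov := mul_measure_le_measure_prodMk_le Pr ν hS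
      ((ae_restrict_iff' measurableSet_Icc).2 (.of_forall hfixed)) (ENNReal.ofReal b)
    rw [Measure.restrict_apply_univ, Real.volume_Icc, add_sub_cancel_left, ENNReal.ofReal_one,
      mul_one, mul_comm, ← ENNReal.le_div_iff_mul_le (.inl (ENNReal.ofReal_pos.2 hb).ne')
      (.inl ENNReal.ofReal_ne_top)] at hmarkov
    rwa [mul_comm, ← div_eq_mul_inv, ENNReal.ofReal_div_of_pos hb]
  · intro ω hω E hE hM
    by_contra! hgap
    have hN : (0 : ℝ) < #(zball G hfin x L) :=
      Nat.cast_pos.2 (card_pos.2 ⟨x, self_mem_zball G hfin x L⟩)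
    have hbN : b * #(zball G hfin x L) ≤ a * c ^ 2 := by
      have := (le_min_iff.1 hbmin).1
      rwa [inv_mul_eq_div, div_mul_eq_mul_div, le_div_iff₀ hN] at this
    obtain ⟨hb₁, hnear⟩ := ofReal_le_mfn_of_abs_sub_le (fun z => V z ω) hfin hL ha hc
      (fun μ hμ => (hgap μ hμ).le) hbN hM
    refine hω ((ofReal_le_volume_Icc_inter_Icc hE hb.le hb₁.le).trans ?_)
    rw [Measure.restrict_apply' measurableSet_Icc]
    exact measure_mono fun E' ⟨hE'I, hE'E⟩ =>
      ⟨hnear E' (abs_sub_le_iff.2 ⟨by linarith [hE'E.2], by linarith [hE'E.1]⟩), hE'I⟩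
end

section
/- Let I ⊆ ℝ be an interval of length 1, B_L(x) a ball with N = |B_L(x)|, and let a, P_L > 0 be such that ℙ(M_x(E) ≥ a) ≤ P_L for every E ∈ I. Then for every b ≥ P_L there exists a measurable event 𝓑_b with ℙ(𝓑_b) ≤ b^{−1}·P_L such that for every ω ∉ 𝓑_b the set {E ∈ I : M_x(E;ω) ≥ a} is contained in a union of at most 3N² closed intervals J_1, …, J_K ⊆ ℝ whose total length satisfies Σ_{i=1}^{K} |J_i| ≤ b. -/
/-!
Statement 8: spectral reduction, part (A) of Theorem `SW.CPT` in the paper: outside an event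
of probability `b⁻¹ P_L`, the set of energies in `I` where `M_x(E) ≥ a` is covered by at
most `3N²` intervals of total length at most `b`.
-/

open Finset

open scoped ENNReal Classical

/-!
For fixed `ω`, Cramer's rule gives `G(x,v;E) = adj(E - H)_{xv} / det(E - H)`, so off the
spectrum `M_x(E) ≥ a` iff `a² χ(E)² - adj_{xv}(E)² ≤ 0` for some inner boundary point `v`, where
`χ` is the characteristic polynomial; adding `χ²` to catch the spectrum, the bad set is
`{E ∈ I : f(E) ≤ 0 for some f ∈ F}` for at most `N` nonzero polynomials of degree `≤ 2N`. Every
connected component of such a set is a closed interval whose left endpoint is either the left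
end of `I` or a root of some `f ∈ F`, so there are at most `1 + 2N² ≤ 3N²` of them, and their
total length is the Lebesgue measure of the bad set. By Fubini the `ℙ`-mean of that measure is
at most `P_L`, and Markov's inequality bounds the probability that it exceeds `b`.
-/

open scoped Polynomial Topology

namespace Matrix

variable {n : Type*} [Fintype n] [DecidableEq n]

theorem natDegree_det_le_sum {R : Type*} [CommRing R] (M : Matrix n n R[X]) (d : n → ℕ)
    (h : ∀ i j, (M i j).natDegree ≤ d i) : M.det.natDegree ≤ ∑ i, d i := by
  rw [det_apply']
  refine Polynomial.natDegree_sum_le_of_forall_le _ _ fun σ _ => ?_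
  refine Polynomial.natDegree_mul_le.trans ?_
  rw [Polynomial.natDegree_intCast, zero_add]
  calc (∏ i, M (σ i) i).natDegree ≤ ∑ i, (M (σ i) i).natDegree :=
        Polynomial.natDegree_prod_le _ _
    _ ≤ ∑ i, d (σ i) := Finset.sum_le_sum fun i _ => h (σ i) i
    _ = ∑ i, d i := Equiv.sum_comp σ d

theorem natDegree_charmatrix_apply_le {R : Type*} [CommRing R] (M : Matrix n n R) (i j : n) :
    (M.charmatrix i j).natDegree ≤ 1 := by
  by_cases h : i = j
  · subst h
    rw [charmatrix_apply_eq]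
    exact Polynomial.natDegree_X_sub_C_le _
  · simp [charmatrix_apply_ne _ _ _ h]

theorem natDegree_adjugate_charmatrix_apply_le {R : Type*} [CommRing R] (M : Matrix n n R)
    (i j : n) : (M.charmatrix.adjugate i j).natDegree ≤ Fintype.card n - 1 := by
  rw [adjugate_apply]
  refine (natDegree_det_le_sum _ (fun k => if k = j then 0 else 1) fun k l => ?_).trans ?_
  · by_cases hk : k = j
    · subst hk
      simp only [updateRow_self, if_true]
      by_cases hl : l = i
      · subst hl; simp
      · simp [Pi.single_eq_of_ne hl]
    · rw [updateRow_ne hk, if_neg hk]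
      exact natDegree_charmatrix_apply_le M k l
  · simp [Finset.sum_ite, Finset.filter_ne', Finset.card_erase_of_mem]

theorem inv_neg {R : Type*} [CommRing R] (A : Matrix n n R) : (-A)⁻¹ = -A⁻¹ := by
  by_cases h : IsUnit A.det
  · exact inv_eq_left_inv (by rw [neg_mul_neg, nonsing_inv_mul A h])
  · have h' : ¬IsUnit (-A).det := by
      rw [det_neg]
      exact fun hu => h (by simpa using (isUnit_of_mul_isUnit_right hu))
    rw [nonsing_inv_apply_not_isUnit _ h, nonsing_inv_apply_not_isUnit _ h', neg_zero]

theorem sub_smul_one_eq_neg {R : Type*} [CommRing R] (M : Matrix n n R) (t : R) :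
    M - t • (1 : Matrix n n R) = -(scalar n t - M) := by
  rw [neg_sub, scalar_apply, smul_one_eq_diagonal]

theorem charmatrix_map_eval {R : Type*} [CommRing R] (M : Matrix n n R) (t : R) :
    M.charmatrix.map (Polynomial.eval t) = scalar n t - M := by
  ext i j
  by_cases h : i = j
  · subst h; simp
  · simp [h]

end Matrix

section Green

variable {n : Type*} [Fintype n] [DecidableEq n]

theorem mem_specSet_iff_eval_charpoly (M : Matrix n n ℝ) (E : ℝ) :
    E ∈ specSet M ↔ M.charpoly.eval E = 0 := by
  rw [specSet, Set.mem_ofPred_eq, Matrix.sub_smul_one_eq_neg, Matrix.det_neg, Matrix.eval_charpoly]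
  simp

theorem green_apply (M : Matrix n n ℝ) (E : ℝ) (i j : n) :
    green M E i j = -((M.charpoly.eval E)⁻¹ * (M.charmatrix.adjugate i j).eval E) := by
  have hadj :
      M.charmatrix.adjugate.map (Polynomial.eval E) = (Matrix.scalar n E - M).adjugate := by
    rw [← Matrix.charmatrix_map_eval, ← Polynomial.coe_evalRingHom, ← RingHom.mapMatrix_apply,
      ← RingHom.mapMatrix_apply, RingHom.map_adjugate]
  rw [green, Matrix.sub_smul_one_eq_neg, Matrix.inv_neg, Matrix.inv_def, Matrix.eval_charpoly,
    ← hadj]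
  simp only [Matrix.neg_apply, Matrix.smul_apply, Matrix.map_apply, smul_eq_mul,
    Ring.inverse_eq_inv]

theorem le_abs_inv_mul_iff {a d q : ℝ} (ha : 0 ≤ a) (hd : d ≠ 0) :
    a ≤ |d⁻¹ * q| ↔ a ^ 2 * d ^ 2 - q ^ 2 ≤ 0 := by
  rw [abs_mul, abs_inv, inv_mul_eq_div, le_div_iff₀ (abs_pos.mpr hd), sub_nonpos,
    ← pow_le_pow_iff_left₀ (by positivity) (abs_nonneg q) two_ne_zero, mul_pow, sq_abs, sq_abs]

noncomputable def greenPoly (M : Matrix n n ℝ) (a : ℝ) (i j : n) : ℝ[X] :=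
  Polynomial.C (a ^ 2) * M.charpoly ^ 2 - (M.charmatrix.adjugate i j) ^ 2

theorem natDegree_greenPoly (M : Matrix n n ℝ) {a : ℝ} (ha : a ≠ 0) (i j : n) :
    (greenPoly M a i j).natDegree = 2 * Fintype.card n := by
  have hn : 0 < Fintype.card n := Fintype.card_pos_iff.mpr ⟨i⟩
  have hlead : (Polynomial.C (a ^ 2) * M.charpoly ^ 2).natDegree = 2 * Fintype.card n := by
    rw [Polynomial.natDegree_C_mul (pow_ne_zero 2 ha), Polynomial.natDegree_pow,
      Matrix.charpoly_natDegree_eq_dim]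
  have hadj : ((M.charmatrix.adjugate i j) ^ 2).natDegree < 2 * Fintype.card n := by
    have := M.natDegree_adjugate_charmatrix_apply_le i j
    rw [Polynomial.natDegree_pow]
    omega
  rw [greenPoly, Polynomial.natDegree_sub_eq_left_of_natDegree_lt (hlead ▸ hadj), hlead]

theorem greenPoly_ne_zero (M : Matrix n n ℝ) {a : ℝ} (ha : a ≠ 0) (i j : n) :
    greenPoly M a i j ≠ 0 := by
  refine Polynomial.ne_zero_of_natDegree_gt (n := 0) ?_
  rw [natDegree_greenPoly M ha i j]
  have : 0 < Fintype.card n := Fintype.card_pos_iff.mpr ⟨i⟩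
  omega

theorem le_abs_green_iff (M : Matrix n n ℝ) {a E : ℝ} (ha : 0 ≤ a) (hE : E ∉ specSet M)
    (i j : n) : a ≤ |green M E i j| ↔ (greenPoly M a i j).eval E ≤ 0 := by
  rw [mem_specSet_iff_eval_charpoly] at hE
  rw [green_apply, abs_neg, le_abs_inv_mul_iff ha hE, greenPoly]
  simp

noncomputable def greenPolys (M : Matrix n n ℝ) (a : ℝ) (i : n) (T : Finset n) :
    Finset ℝ[X] :=
  insert (M.charpoly ^ 2) (T.image (greenPoly M a i))

theorem mem_specSet_or_le_abs_green_iff (M : Matrix n n ℝ) {a : ℝ} (ha : 0 ≤ a) (i : n)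
    (T : Finset n) (E : ℝ) :
    (E ∈ specSet M ∨ ∃ j ∈ T, a ≤ |green M E i j|) ↔
      ∃ f ∈ greenPolys M a i T, f.eval E ≤ 0 := by
  simp only [greenPolys, Finset.exists_mem_insert, Finset.exists_mem_image,
    Polynomial.eval_pow, sq_nonpos_iff, ← mem_specSet_iff_eval_charpoly]
  by_cases hE : E ∈ specSet M
  · simp [hE]
  · simp only [hE, false_or, le_abs_green_iff M ha hE]

theorem card_greenPolys_le (M : Matrix n n ℝ) (a : ℝ) (i : n) (T : Finset n) :
    (greenPolys M a i T).card ≤ T.card + 1 :=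
  (Finset.card_insert_le _ _).trans (Nat.add_le_add_right Finset.card_image_le 1)

theorem natDegree_le_of_mem_greenPolys (M : Matrix n n ℝ) {a : ℝ} (ha : a ≠ 0) (i : n)
    (T : Finset n) : ∀ f ∈ greenPolys M a i T, f.natDegree ≤ 2 * Fintype.card n := by
  simp only [greenPolys, Finset.forall_mem_insert, Finset.forall_mem_image]
  refine ⟨?_, fun j _ => (natDegree_greenPoly M ha i j).le⟩
  rw [Polynomial.natDegree_pow, Matrix.charpoly_natDegree_eq_dim, mul_comm]

theorem ne_zero_of_mem_greenPolys (M : Matrix n n ℝ) {a : ℝ} (ha : a ≠ 0) (i : n)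
    (T : Finset n) : ∀ f ∈ greenPolys M a i T, f ≠ 0 := by
  simp only [greenPolys, Finset.forall_mem_insert, Finset.forall_mem_image]
  exact ⟨pow_ne_zero 2 (Matrix.charpoly_monic M).ne_zero,
    fun j _ => greenPoly_ne_zero M ha i j⟩

end Green

section Cover

theorem IsClosed.isClosed_connectedComponentIn {X : Type*} [TopologicalSpace X] {S : Set X}
    (hS : IsClosed S) (E : X) : IsClosed (connectedComponentIn S E) := by
  by_cases hE : E ∈ S
  · rw [connectedComponentIn_eq_image hE]
    exact hS.isClosedEmbedding_subtypeVal.isClosedMap _ isClosed_connectedComponent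
  · rw [connectedComponentIn_eq_empty hE]
    exact isClosed_empty

theorem IsCompact.isCompact_connectedComponentIn {X : Type*} [TopologicalSpace X] [T2Space X]
    {S : Set X} (hS : IsCompact S) (E : X) : IsCompact (connectedComponentIn S E) :=
  hS.of_isClosed_subset (hS.isClosed.isClosed_connectedComponentIn E)
    (connectedComponentIn_subset S E)

variable {α : Type*} [ConditionallyCompleteLinearOrder α] [TopologicalSpace α] [OrderTopology α]

theorem IsCompact.connectedComponentIn_eq_Icc {S : Set α} (hS : IsCompact S) {E : α}
    (hE : E ∈ S) :
    connectedComponentIn S E =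
      Set.Icc (sInf (connectedComponentIn S E)) (sSup (connectedComponentIn S E)) :=
  eq_Icc_of_connected_compact (isConnected_connectedComponentIn_iff.mpr hE)
    (hS.isCompact_connectedComponentIn E)

theorem IsCompact.sInf_mem_connectedComponentIn {S : Set α} (hS : IsCompact S) {E : α}
    (hE : E ∈ S) : sInf (connectedComponentIn S E) ∈ connectedComponentIn S E :=
  (hS.isCompact_connectedComponentIn E).sInf_mem ⟨E, mem_connectedComponentIn hE⟩

variable [DenselyOrdered α] [NoMinOrder α]

theorem IsCompact.sInf_connectedComponentIn_mem {S : Set α} (hS : IsCompact S) {R : Set α}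
    (hR : ∀ l ∈ S, l ∉ R → S ∈ 𝓝[≤] l) {E : α} (hE : E ∈ S) :
    sInf (connectedComponentIn S E) ∈ R := by
  have hl := hS.sInf_mem_connectedComponentIn hE
  set l := sInf (connectedComponentIn S E)
  by_contra hlR
  obtain ⟨l', hl', hIcc⟩ :=
    mem_nhdsLE_iff_exists_Icc_subset.mp (hR l (connectedComponentIn_subset S E hl) hlR)
  have hsub : Set.Icc l' l ⊆ connectedComponentIn S E := by
    rw [connectedComponentIn_eq hl]
    exact isPreconnected_Icc.subset_connectedComponentIn (Set.right_mem_Icc.mpr hl'.le) hIcc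
  exact hl'.not_ge (csInf_le (hS.isCompact_connectedComponentIn E).bddBelow
    (hsub (Set.left_mem_Icc.mpr hl'.le)))

theorem IsCompact.exists_Icc_partition {S : Set α} (hS : IsCompact S) (R : Finset α)
    (hR : ∀ l ∈ S, l ∉ R → S ∈ 𝓝[≤] l) :
    ∃ (K : ℕ) (lo hi : Fin K → α), K ≤ R.card ∧ (∀ i, lo i ≤ hi i) ∧
      (Pairwise fun i j => Disjoint (Set.Icc (lo i) (hi i)) (Set.Icc (lo j) (hi j))) ∧
      ⋃ i, Set.Icc (lo i) (hi i) = S := by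
  classical
  set C : Finset (Set α) := (R.filter (· ∈ S)).image (connectedComponentIn S)
  have hcomp_mem : ∀ E ∈ S, connectedComponentIn S E ∈ C := by
    intro E hE
    have hl := hS.sInf_mem_connectedComponentIn hE
    refine Finset.mem_image.mpr ⟨_, Finset.mem_filter.mpr
      ⟨hS.sInf_connectedComponentIn_mem hR hE, connectedComponentIn_subset S E hl⟩, ?_⟩
    exact (connectedComponentIn_eq hl).symm
  let e := C.equivFin.symm
  have he : ∀ i, ∃ r ∈ S, (e i : Set α) = connectedComponentIn S r := fun i => by
    obtain ⟨r, hr, hre⟩ := Finset.mem_image.mp (e i).2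
    exact ⟨r, (Finset.mem_filter.mp hr).2, hre.symm⟩
  choose r hrS hr using he
  have hIcc : ∀ i, Set.Icc (sInf (e i : Set α)) (sSup (e i : Set α)) = e i := fun i => by
    rw [hr i]
    exact (hS.connectedComponentIn_eq_Icc (hrS i)).symm
  refine ⟨C.card, fun i => sInf (e i : Set α), fun i => sSup (e i : Set α),
    Finset.card_image_le.trans (Finset.card_filter_le _ _), fun i => ?_, fun i j hij => ?_, ?_⟩
  · refine Set.nonempty_Icc.mp ⟨r i, ?_⟩
    rw [hIcc, hr]
    exact mem_connectedComponentIn (hrS i)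
  · simp only [hIcc]
    refine Set.disjoint_left.mpr fun z hzi hzj => hij (e.injective (Subtype.ext ?_))
    rw [hr] at hzi hzj ⊢
    rw [hr, connectedComponentIn_eq hzi, connectedComponentIn_eq hzj]
  · simp only [hIcc]
    refine subset_antisymm (Set.iUnion_subset fun i => hr i ▸ connectedComponentIn_subset S _)
      fun E hE => Set.mem_iUnion.mpr ?_
    obtain ⟨i, hi⟩ := e.surjective ⟨_, hcomp_mem E hE⟩
    exact ⟨i, by rw [hi]; exact mem_connectedComponentIn hE⟩

theorem exists_Icc_partition_polynomial_sublevel (F : Finset ℝ[X]) (hF : ∀ f ∈ F, f ≠ 0)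
    (t₀ t₁ : ℝ) :
    ∃ (K : ℕ) (lo hi : Fin K → ℝ), K ≤ 1 + ∑ f ∈ F, f.natDegree ∧ (∀ i, lo i ≤ hi i) ∧
      (Pairwise fun i j => Disjoint (Set.Icc (lo i) (hi i)) (Set.Icc (lo j) (hi j))) ∧
      ⋃ i, Set.Icc (lo i) (hi i) = {E ∈ Set.Icc t₀ t₁ | ∃ f ∈ F, f.eval E ≤ 0} := by
  classical
  set S := {E ∈ Set.Icc t₀ t₁ | ∃ f ∈ F, f.eval E ≤ 0}
  have hS : IsCompact S := by
    have : S = Set.Icc t₀ t₁ ∩ ⋃ f ∈ F, {E | f.eval E ≤ 0} := by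
      ext E; simp [S]
    rw [this]
    exact isCompact_Icc.inter_right (isClosed_biUnion_finset fun f _ =>
      isClosed_le f.continuous continuous_const)
  set R := insert t₀ (F.biUnion fun f => f.roots.toFinset)
  have hR : ∀ l ∈ S, l ∉ R → S ∈ 𝓝[≤] l := by
    rintro l ⟨⟨ht₀, ht₁⟩, f, hf, hfl⟩ hlR
    simp only [R, Finset.mem_insert, Finset.mem_biUnion, Multiset.mem_toFinset, not_or,
      not_exists, not_and] at hlR
    have hneg : f.eval l < 0 :=
      hfl.lt_of_ne fun h => hlR.2 f hf ((Polynomial.mem_roots (hF f hf)).mpr h)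
    have hf_nhds : {E | f.eval E < 0} ∈ 𝓝 l :=
      (isOpen_lt f.continuous continuous_const).mem_nhds hneg
    have ht₀_nhds : Set.Ioi t₀ ∈ 𝓝 l := Ioi_mem_nhds (ht₀.lt_of_ne' hlR.1)
    filter_upwards [nhdsWithin_le_nhds hf_nhds, nhdsWithin_le_nhds ht₀_nhds,
      self_mem_nhdsWithin] with E hfE hE₀ hEl
    exact ⟨⟨le_of_lt hE₀, le_trans hEl ht₁⟩, f, hf, le_of_lt hfE⟩
  have hRcard : R.card ≤ 1 + ∑ f ∈ F, f.natDegree := by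
    refine (Finset.card_insert_le _ _).trans ?_
    rw [add_comm]
    refine Nat.add_le_add_left (Finset.card_biUnion_le.trans (Finset.sum_le_sum fun f _ => ?_)) 1
    exact (Multiset.toFinset_card_le _).trans f.card_roots'
  obtain ⟨K, lo, hi, hK, hle, hdisj, hunion⟩ := hS.exists_Icc_partition R hR
  exact ⟨K, lo, hi, hK.trans hRcard, hle, hdisj, hunion⟩

end Cover

theorem exists_Icc_partition_green_sublevel {n : Type*} [Fintype n] [DecidableEq n]
    (M : Matrix n n ℝ) {a : ℝ} (ha : 0 < a) (i : n) (T : Finset n) (hiT : i ∉ T)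
    (t₀ t₁ : ℝ) :
    ∃ (K : ℕ) (lo hi : Fin K → ℝ), K ≤ 3 * Fintype.card n ^ 2 ∧ (∀ k, lo k ≤ hi k) ∧
      (Pairwise fun k l => Disjoint (Set.Icc (lo k) (hi k)) (Set.Icc (lo l) (hi l))) ∧
      ⋃ k, Set.Icc (lo k) (hi k) =
        {E ∈ Set.Icc t₀ t₁ | E ∈ specSet M ∨ ∃ j ∈ T, a ≤ |green M E i j|} := by
  set N := Fintype.card n
  set F := greenPolys M a i T
  have hN : 1 ≤ N := Fintype.card_pos_iff.mpr ⟨i⟩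
  have hT : T.card + 1 ≤ N := by
    have := Finset.card_lt_univ_of_notMem hiT
    omega
  have hdeg : ∑ f ∈ F, f.natDegree ≤ N * (2 * N) :=
    (Finset.sum_le_card_nsmul _ _ _ (natDegree_le_of_mem_greenPolys M ha.ne' i T)).trans
      (Nat.mul_le_mul_right _ ((card_greenPolys_le M a i T).trans hT))
  obtain ⟨K, lo, hi, hK, hle, hdisj, hunion⟩ := exists_Icc_partition_polynomial_sublevel F
    (ne_zero_of_mem_greenPolys M ha.ne' i T) t₀ t₁
  refine ⟨K, lo, hi, ?_, hle, hdisj, ?_⟩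
  · nlinarith
  · rw [hunion]
    ext E
    simp only [Set.mem_ofPred_eq, mem_specSet_or_le_abs_green_iff M ha.le i T E, F]

section Mfn

variable {Z : Type*} (G : SimpleGraph Z)
  (hfin : ∀ (x : Z) (r : ℕ), {y : Z | G.dist x y ≤ r}.Finite)

noncomputable def innerBoundary (x : Z) (L : ℕ) : Finset (zball G hfin x L) :=
  Finset.univ.filter fun v => ∃ w : Z, G.Adj (v : Z) w ∧ L < G.dist x w

theorem center_notMem_innerBoundary {x : Z} {L : ℕ} (hL : 1 ≤ L) :
    ⟨x, self_mem_zball G hfin x L⟩ ∉ innerBoundary G hfin x L := by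
  simp only [innerBoundary, Finset.mem_filter, Finset.mem_univ, true_and, not_exists, not_and,
    not_lt]
  intro w hw
  rw [SimpleGraph.dist_eq_one_iff_adj.mpr hw]
  exact hL

variable [DecidableEq Z] [DecidableRel G.Adj] [∀ v : Z, Fintype (G.neighborSet v)]

theorem ofReal_le_Mfn_iff (V : Z → ℝ) (x : Z) (L : ℕ) {a : ℝ} (ha : 0 < a) (E : ℝ) :
    ENNReal.ofReal a ≤ Mfn G hfin V x L E ↔
      E ∈ specSet (Ham G V (zball G hfin x L)) ∨ ∃ v ∈ innerBoundary G hfin x L,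
        a ≤ |green (Ham G V (zball G hfin x L)) E ⟨x, self_mem_zball G hfin x L⟩ v| := by
  rw [Mfn]
  split_ifs with hE
  · simp [hE]
  · simp only [hE, false_or, ← ENNReal.ofReal_le_ofReal_iff (abs_nonneg _)]
    rw [← Finset.le_sup_iff (ENNReal.ofReal_pos.mpr ha), Finset.sup_eq_iSup]
    simp [innerBoundary]

theorem exists_Icc_partition_setOf_ofReal_le_Mfn (V : Z → ℝ) (x : Z) {L : ℕ} (hL : 1 ≤ L)
    {a : ℝ} (ha : 0 < a) (t₀ t₁ : ℝ) :
    ∃ (K : ℕ) (lo hi : Fin K → ℝ), K ≤ 3 * (zball G hfin x L).card ^ 2 ∧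
      (∀ i, lo i ≤ hi i) ∧
      (Pairwise fun i j => Disjoint (Set.Icc (lo i) (hi i)) (Set.Icc (lo j) (hi j))) ∧
      ⋃ i, Set.Icc (lo i) (hi i) =
        {E ∈ Set.Icc t₀ t₁ | ENNReal.ofReal a ≤ Mfn G hfin V x L E} := by
  simp only [ofReal_le_Mfn_iff G hfin V x L ha, ← Fintype.card_coe (zball G hfin x L)]
  exact exists_Icc_partition_green_sublevel _ ha _ _ (center_notMem_innerBoundary G hfin hL) _ _

end Mfn

open MeasureTheory

theorem sum_sub_le_of_pairwise_disjoint_Icc {ι : Type*} [Fintype ι] {lo hi : ι → ℝ}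
    (hle : ∀ i, lo i ≤ hi i)
    (hdisj : Pairwise fun i j => Disjoint (Set.Icc (lo i) (hi i)) (Set.Icc (lo j) (hi j)))
    {b : ℝ} (hb : 0 ≤ b) (hvol : volume (⋃ i, Set.Icc (lo i) (hi i)) ≤ ENNReal.ofReal b) :
    ∑ i, (hi i - lo i) ≤ b := by
  rw [measure_iUnion hdisj fun i => measurableSet_Icc, tsum_fintype] at hvol
  simp only [Real.volume_Icc] at hvol
  rwa [← ENNReal.ofReal_sum_of_nonneg fun i _ => sub_nonneg.mpr (hle i),
    ENNReal.ofReal_le_ofReal_iff hb] at hvol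

theorem mul_meas_ge_measure_prodMk_le {α β : Type*} [MeasurableSpace α] [MeasurableSpace β]
    (μ : Measure α) (ν : Measure β) [SFinite μ] [SFinite ν] {s : Set (α × β)}
    (hs : MeasurableSet s) {T : Set β} (hT : MeasurableSet T) (hsT : ∀ p ∈ s, p.2 ∈ T)
    {c : ℝ≥0∞} (hc : ∀ y ∈ T, μ ((·, y) ⁻¹' s) ≤ c) (ε : ℝ≥0∞) :
    ε * μ {x | ε ≤ ν (Prod.mk x ⁻¹' s)} ≤ c * ν T := by
  calc ε * μ {x | ε ≤ ν (Prod.mk x ⁻¹' s)} ≤ ∫⁻ x, ν (Prod.mk x ⁻¹' s) ∂μ :=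
        mul_meas_ge_le_lintegral₀ (measurable_measure_prodMk_left hs).aemeasurable ε
    _ = ∫⁻ y, μ ((·, y) ⁻¹' s) ∂ν := by
        rw [← Measure.prod_apply hs, Measure.prod_apply_symm hs]
    _ ≤ ∫⁻ y, T.indicator (fun _ => c) y ∂ν := by
        refine lintegral_mono fun y => ?_
        by_cases hy : y ∈ T
        · rw [Set.indicator_of_mem hy]
          exact hc y hy
        · have : (·, y) ⁻¹' s = ∅ :=
            Set.eq_empty_of_forall_notMem fun x hx => hy (hsT _ hx)
          simp [this]
    _ = c * ν T := lintegral_indicator_const hT c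

theorem statement8 {Z : Type*} [DecidableEq Z] (G : SimpleGraph Z) [DecidableRel G.Adj]
    [∀ v : Z, Fintype (G.neighborSet v)]
    (hconn : G.Connected) (hcount : Countable Z)
    (hfin : ∀ (x : Z) (r : ℕ), {y : Z | G.dist x y ≤ r}.Finite)
    {Ω : Type*} [MeasurableSpace Ω] (Pr : Measure Ω) [IsProbabilityMeasure Pr]
    (V : Z → Ω → ℝ)
    (I : Set ℝ) (t₀ : ℝ) (hI : I = Set.Icc t₀ (t₀ + 1))
    (x : Z) (L : ℕ) (hL : 1 ≤ L)
    -- joint measurability of `(ω, E) ↦ M_x(E; ω)`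
    (hmeas : Measurable fun p : Ω × ℝ => Mfn G hfin (fun z => V z p.1) x L p.2)
    (a PL : ℝ) (ha : 0 < a) (hPL : 0 < PL)
    -- fixed-energy bound: for every `E ∈ I`, `Pr(M_x(E) ≥ a) ≤ P_L`
    (hfixed : ∀ E ∈ I,
      Pr {ω | ENNReal.ofReal a ≤ Mfn G hfin (fun z => V z ω) x L E} ≤ ENNReal.ofReal PL) :
    ∀ b : ℝ, PL ≤ b →
      ∃ B : Set Ω, MeasurableSet B ∧ Pr B ≤ ENNReal.ofReal (b⁻¹ * PL) ∧
        ∀ ω ∉ B, ∃ (K : ℕ) (lo hi : Fin K → ℝ),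
          K ≤ 3 * (zball G hfin x L).card ^ 2 ∧
          (∀ i, lo i ≤ hi i) ∧
          (∑ i, (hi i - lo i)) ≤ b ∧
          {E ∈ I | ENNReal.ofReal a ≤ Mfn G hfin (fun z => V z ω) x L E} ⊆
            ⋃ i, Set.Icc (lo i) (hi i) := by
  intro b hb
  have hb0 : 0 < b := hPL.trans_le hb
  set s : Set (Ω × ℝ) :=
    {p | p.2 ∈ I ∧ ENNReal.ofReal a ≤ Mfn G hfin (fun z => V z p.1) x L p.2}
  have hI_meas : MeasurableSet I := hI ▸ measurableSet_Icc
  have hs : MeasurableSet s := (measurable_snd hI_meas).inter (hmeas measurableSet_Ici)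
  refine ⟨{ω | ENNReal.ofReal b ≤ volume (Prod.mk ω ⁻¹' s)},
    measurableSet_le measurable_const (measurable_measure_prodMk_left hs), ?_, ?_⟩
  · have hmarkov := mul_meas_ge_measure_prodMk_le Pr volume hs hI_meas (fun p hp => hp.1)
      (fun E hE => (measure_mono fun _ hω => hω.2).trans (hfixed E hE)) (ENNReal.ofReal b)
    rw [hI, Real.volume_Icc, add_sub_cancel_left, ENNReal.ofReal_one, mul_one, mul_comm,
      ← ENNReal.le_div_iff_mul_le (.inl (by simpa using hb0)) (.inl ENNReal.ofReal_ne_top),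
      ← ENNReal.ofReal_div_of_pos hb0] at hmarkov
    rwa [inv_mul_eq_div]
  · intro ω hω
    obtain ⟨K, lo, hi, hK, hle, hdisj, hunion⟩ :=
      exists_Icc_partition_setOf_ofReal_le_Mfn G hfin (fun z => V z ω) x hL ha t₀ (t₀ + 1)
    rw [← hI] at hunion
    have hvol : volume (⋃ i, Set.Icc (lo i) (hi i)) ≤ ENNReal.ofReal b := by
      rw [hunion]
      exact (not_le.mp hω).le
    exact ⟨K, lo, hi, hK, hle, sum_sub_le_of_pairwise_disjoint_Icc hle hdisj hb0.le hvol,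
      hunion.symm.subset⟩
end

section
/- Fix an integer L ≥ 1, m > 0, an interval I ⊆ ℝ, and ζ(L) > 0, and assume that for every pair of disjoint balls B_L(x), B_L(y) one has ℙ(∃ E ∈ I : both B_L(x) and B_L(y) are (E,m)-S) ≤ ζ(L). Then for any x, y ∈ 𝒵 with d(x,y) > 2L+1, any finite connected subgraph 𝒢 ⊆ 𝒵 with 𝒢 ⊇ B_L(x) ∪ B_L(y), and any Borel function φ : ℝ → ℂ with |φ| ≤ 1 and φ = 0 outside I, one has 𝔼[ |⟨δ_x, φ(H_𝒢(ω)) δ_y⟩| ] ≤ 4·exp(−mL) + ζ(L). -/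
/-!
Statement 11: from variable-energy two-volume bounds to eigenfunction-correlator bounds in
finite volumes (Theorem `GK` in the paper, the finite-volume Germinet–Klein argument).
-/

open Finset

lemma Ham_isHermitian {Z : Type*} [DecidableEq Z] (G : SimpleGraph Z) [DecidableRel G.Adj]
    [∀ v : Z, Fintype (G.neighborSet v)] (V : Z → ℝ) (Λ : Finset Z) :
    (Ham G V Λ).IsHermitian := by
  unfold Matrix.IsHermitian
  ext x y
  simp only [Matrix.conjTranspose_apply, Ham, star_trivial]
  by_cases h : (x : Z) = (y : Z)
  · simp only [h, if_true, eq_self_iff_true]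
    have hd : G.degree (y : Z) = G.degree (x : Z) := congrArg (fun v : Z => G.degree v) h.symm
    have hv : V (y : Z) = V (x : Z) := congrArg V h.symm
    rw [hd]
  · have h' : ¬ (y : Z) = (x : Z) := fun hh => h hh.symm
    rw [if_neg h, if_neg h', if_congr (G.adj_comm (y : Z) (x : Z)) rfl rfl]

/-- Borel functional calculus `φ(H)` of a Hermitian matrix, via its eigendecomposition:
`φ(H)(i,j) = Σ_k φ(λ_k) ψ_k(i) ψ_k(j)*`. -/
noncomputable def matFun {n : Type*} [Fintype n] [DecidableEq n] (H : Matrix n n ℝ)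
    (hH : H.IsHermitian) (φ : ℝ → ℂ) : Matrix n n ℂ := fun i j =>
  ∑ k, φ (hH.eigenvalues k) * ((hH.eigenvectorBasis k i : ℝ) : ℂ) *
    star ((hH.eigenvectorBasis k j : ℝ) : ℂ)

open MeasureTheory

/-!
Fix `ω` and expand `φ(H_Λ)(x,y) = ∑ₖ φ(λₖ) ψₖ(x) ψₖ(y)` in an orthonormal eigenbasis. Off the
bad event, for each eigenvalue `λₖ ∈ I` one of the balls, say `B = B_L(x)`, is
`(λₖ,m)`-nonsingular. Restricting the eigenvalue equation to `B` gives the Poisson formula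
`ψₖ(x) = ∑ G_B(x,u;λₖ) ψₖ(v)` over the edges `u ~ v` leaving `B`; on these `d(x,u) ≥ L`, so
nonsingularity gives `C_d² L^d |G_B(x,u;λₖ)| ≤ exp(-mL)`, and there are at most `C_d² L^d` such
edges. Summing `|ψₖ(x)| |ψₖ(y)|` over `k` and using that the rows of an orthogonal matrix are
unit vectors (Cauchy–Schwarz), each ball contributes at most `exp(-mL)`. On the bad event the
correlator is at most `1`, and the bad event has probability at most `ζ(L)`.
-/

open Matrix

theorem Matrix.apply_eq_neg_sum_inv_submatrix_mul {𝕜 m n : Type*} [Field 𝕜] [Fintype m]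
    [Fintype n] [DecidableEq m] [DecidableEq n] (H : Matrix n n 𝕜) (ι : m ↪ n) {E : 𝕜}
    (hE : IsUnit (H.submatrix ι ι - E • 1).det) {ψ : n → 𝕜} (hψ : H *ᵥ ψ = E • ψ) (w : m) :
    ψ (ι w) = -∑ u, ∑ v ∈ (univ.map ι)ᶜ,
      (H.submatrix ι ι - E • 1)⁻¹ w u * H (ι u) v * ψ v := by
  set K := H.submatrix ι ι - E • 1
  have hK : K *ᵥ (ψ ∘ ι) = fun u => -∑ v ∈ (univ.map ι)ᶜ, H (ι u) v * ψ v := by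
    funext u
    have h := congrFun hψ (ι u)
    rw [mulVec, dotProduct, ← sum_add_sum_compl (univ.map ι), sum_map] at h
    simp only [K, sub_mulVec, Pi.sub_apply, smul_mulVec, one_mulVec, Pi.smul_apply,
      smul_eq_mul] at h ⊢
    simp only [mulVec, dotProduct, submatrix_apply, Function.comp_apply] at h ⊢
    linear_combination h
  have hψι : ψ ∘ ι = K⁻¹ *ᵥ (K *ᵥ (ψ ∘ ι)) := by
    rw [mulVec_mulVec, nonsing_inv_mul K hE, one_mulVec]
  rw [← Function.comp_apply (f := ψ), hψι, hK]
  simp only [mulVec, dotProduct, mul_neg, mul_sum, mul_assoc, sum_neg_distrib]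

namespace Matrix.IsHermitian

variable {n : Type*} [Fintype n] [DecidableEq n] {H : Matrix n n ℝ} (hH : H.IsHermitian)

theorem sum_eigenvectorBasis_sq (i : n) : ∑ k, hH.eigenvectorBasis k i ^ 2 = 1 := by
  have h := hH.eigenvectorBasis.sum_inner_mul_inner
    (EuclideanSpace.single i (1 : ℝ)) (EuclideanSpace.single i (1 : ℝ))
  simpa [EuclideanSpace.inner_single_left, EuclideanSpace.inner_single_right, sq] using h

theorem sum_abs_eigenvectorBasis_mul_le_one (A : Finset n) (i j : n) :
    ∑ k ∈ A, |hH.eigenvectorBasis k i| * |hH.eigenvectorBasis k j| ≤ 1 := by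
  have hsq (l : n) : ∑ k ∈ A, |hH.eigenvectorBasis k l| ^ 2 ≤ 1 := by
    simp only [sq_abs]
    exact (sum_le_sum_of_subset_of_nonneg (subset_univ A) fun k _ _ => sq_nonneg _).trans
      (hH.sum_eigenvectorBasis_sq l).le
  have hCS := sum_mul_sq_le_sq_mul_sq A
    (fun k => |hH.eigenvectorBasis k i|) (fun k => |hH.eigenvectorBasis k j|)
  have hnn : 0 ≤ ∑ k ∈ A, |hH.eigenvectorBasis k i| * |hH.eigenvectorBasis k j| := by positivity
  nlinarith [hsq i, hsq j, mul_le_one₀ (hsq i) (sum_nonneg fun k _ => sq_nonneg _) (hsq j)]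

theorem norm_matFun_le (φ : ℝ → ℂ) (I : Set ℝ) [DecidablePred (· ∈ I)]
    (hφ1 : ∀ t, ‖φ t‖ ≤ 1) (hφI : ∀ t, t ∉ I → φ t = 0) (i j : n) :
    ‖matFun H hH φ i j‖ ≤ ∑ k ∈ univ.filter (hH.eigenvalues · ∈ I),
      |hH.eigenvectorBasis k i| * |hH.eigenvectorBasis k j| := by
  rw [sum_filter]
  refine (norm_sum_le _ _).trans (sum_le_sum fun k _ => ?_)
  rw [norm_mul, norm_mul, norm_star, Complex.norm_real, Complex.norm_real, Real.norm_eq_abs,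
    Real.norm_eq_abs, mul_assoc]
  split_ifs with hk
  · exact mul_le_of_le_one_left (by positivity) (hφ1 _)
  · simp [hφI _ hk]

theorem norm_matFun_le_one (φ : ℝ → ℂ) (hφ1 : ∀ t, ‖φ t‖ ≤ 1) (i j : n) :
    ‖matFun H hH φ i j‖ ≤ 1 := by
  classical
  exact (hH.norm_matFun_le φ Set.univ hφ1 (fun _ ht => (ht trivial).elim) i j).trans
    (hH.sum_abs_eigenvectorBasis_mul_le_one _ i j)

theorem mul_sum_abs_eigenvectorBasis_mul_le {ι : Type*} (A : Finset n) (P : Finset ι)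
    (π : ι → n) {a ε : ℝ} (hε : 0 ≤ ε) (i j : n)
    (h : ∀ k ∈ A, a * |hH.eigenvectorBasis k i| ≤ ε * ∑ p ∈ P, |hH.eigenvectorBasis k (π p)|) :
    a * ∑ k ∈ A, |hH.eigenvectorBasis k i| * |hH.eigenvectorBasis k j| ≤ ε * #P := by
  calc a * ∑ k ∈ A, |hH.eigenvectorBasis k i| * |hH.eigenvectorBasis k j|
      ≤ ∑ k ∈ A, (ε * ∑ p ∈ P, |hH.eigenvectorBasis k (π p)|) * |hH.eigenvectorBasis k j| := by
        rw [mul_sum]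
        exact sum_le_sum fun k hk => by
          rw [← mul_assoc]; exact mul_le_mul_of_nonneg_right (h k hk) (abs_nonneg _)
    _ = ε * ∑ p ∈ P, ∑ k ∈ A, |hH.eigenvectorBasis k (π p)| * |hH.eigenvectorBasis k j| := by
        simp only [mul_assoc, sum_mul, ← mul_sum]
        rw [sum_comm]
    _ ≤ ε * ∑ _p ∈ P, 1 := by
        gcongr with p
        exact hH.sum_abs_eigenvectorBasis_mul_le_one A (π p) j
    _ = ε * #P := by simp

end Matrix.IsHermitian

section Graph

variable {Z : Type*} (G : SimpleGraph Z) (hfin : ∀ (x : Z) (r : ℕ), {y : Z | G.dist x y ≤ r}.Finite)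

theorem mem_zball {x z : Z} {r : ℕ} : z ∈ zball G hfin x r ↔ G.dist x z ≤ r := by
  simp [zball]

theorem disjoint_zball_of_add_lt_dist (hconn : G.Connected) {x y : Z} {r s : ℕ}
    (h : r + s < G.dist x y) : Disjoint (zball G hfin x r) (zball G hfin y s) := by
  rw [disjoint_left]
  intro z hzx hzy
  rw [mem_zball] at hzx hzy
  have := hconn.dist_triangle (u := x) (v := z) (w := y)
  rw [SimpleGraph.dist_comm (u := z)] at this
  omega

theorem le_dist_of_adj_of_notMem_zball (hconn : G.Connected) {x u z : Z} {r : ℕ}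
    (hadj : G.Adj u z) (hz : z ∉ zball G hfin x r) : r ≤ G.dist x u := by
  rw [mem_zball, not_le] at hz
  have := hconn.dist_triangle (u := x) (v := u) (w := z)
  rw [SimpleGraph.dist_eq_one_iff_adj.2 hadj] at this
  omega

variable [DecidableEq Z] [DecidableRel G.Adj]

def boundaryEdges (B Λ : Finset Z) : Finset (B × Λ) :=
  univ.filter fun p => G.Adj p.1 p.2 ∧ (p.2 : Z) ∉ B

theorem card_boundaryEdges_le [∀ v, Fintype (G.neighborSet v)] (B Λ : Finset Z) {Cd : ℝ}
    (hdeg : ∀ v, (G.degree v : ℝ) ≤ Cd) : (#(boundaryEdges G B Λ) : ℝ) ≤ #B * Cd := by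
  have hfiber : #(boundaryEdges G B Λ) =
      ∑ u : B, #(univ.filter fun v : Λ => G.Adj u v ∧ (v : Z) ∉ B) := by
    simp only [boundaryEdges, card_filter, Fintype.sum_prod_type]
  have hdeg' (u : B) : (#(univ.filter fun v : Λ => G.Adj u v ∧ (v : Z) ∉ B) : ℝ) ≤ Cd := by
    refine le_trans (Nat.cast_le.2 ?_) (hdeg u)
    refine card_le_card_of_injOn Subtype.val (fun v hv => ?_) Subtype.val_injective.injOn
    simpa using (mem_filter.1 hv).2.1
  calc (#(boundaryEdges G B Λ) : ℝ) ≤ ∑ _u : B, Cd := by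
        rw [hfiber, Nat.cast_sum]; exact sum_le_sum fun u _ => hdeg' u
    _ = #B * Cd := by simp

theorem apply_eq_sum_boundaryEdges_green_mul [∀ v, Fintype (G.neighborSet v)] {V : Z → ℝ}
    {B Λ : Finset Z} (hB : B ⊆ Λ) {E : ℝ} (hE : E ∉ specSet (Ham G V B)) {ψ : Λ → ℝ}
    (hψ : Ham G V Λ *ᵥ ψ = E • ψ) (w : B) :
    ψ ⟨w, hB w.2⟩ = ∑ p ∈ boundaryEdges G B Λ, green (Ham G V B) E w p.1 * ψ p.2 := by
  let ι := Subtype.impEmbedding _ _ hB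
  have hcompl : (univ.map ι)ᶜ = univ.filter fun v : Λ => (v : Z) ∉ B := by
    ext v
    simp only [mem_compl, mem_map, mem_univ, true_and, mem_filter, not_exists]
    exact ⟨fun h hv => h ⟨v, hv⟩ rfl, by rintro hv u rfl; exact hv u.2⟩
  have hentry (u : B) (v : Λ) (hv : (v : Z) ∉ B) :
      Ham G V Λ (ι u) v = -if G.Adj u v then 1 else 0 := by
    have huv : (u : Z) ≠ v := fun h => hv (h ▸ u.2)
    change (if (u : Z) = v then _ else 0) - _ = _
    rw [if_neg huv, zero_sub]
    rfl
  have key := Matrix.apply_eq_neg_sum_inv_submatrix_mul _ ι (isUnit_iff_ne_zero.2 hE) hψ w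
  rw [show (Ham G V Λ).submatrix ι ι = Ham G V B from rfl] at key
  refine key.trans ?_
  rw [hcompl, boundaryEdges, sum_filter, Fintype.sum_prod_type, ← sum_neg_distrib]
  refine sum_congr rfl fun u _ => ?_
  rw [sum_filter, ← sum_neg_distrib]
  refine sum_congr rfl fun v _ => ?_
  by_cases hv : (v : Z) ∈ B
  · simp [hv]
  · rw [hentry u v hv, green]
    simp only [hv, not_false_eq_true, and_true, if_true]
    split_ifs <;> ring

end Graph

section Nonsingular

variable {Z : Type*} [DecidableEq Z] (G : SimpleGraph Z) [DecidableRel G.Adj]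
  [∀ v : Z, Fintype (G.neighborSet v)] (hfin : ∀ (x : Z) (r : ℕ), {y : Z | G.dist x y ≤ r}.Finite)
  {V : Z → ℝ} {Cd : ℝ} {d L : ℕ} {m E : ℝ} {x0 : Z}

theorem IsNS.mul_abs_green_le_of_mem_boundaryEdges (hconn : G.Connected) (hL : 1 ≤ L)
    (hm : 0 ≤ m) (hNS : IsNS G hfin V Cd d (3/2) (1/8) (1/6) x0 L E m) {Λ : Finset Z}
    {p : zball G hfin x0 L × Λ} (hp : p ∈ boundaryEdges G (zball G hfin x0 L) Λ) :
    Cd ^ 2 * (L : ℝ) ^ d *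
        |green (Ham G V (zball G hfin x0 L)) E ⟨x0, self_mem_zball G hfin x0 L⟩ p.1| ≤
      Real.exp (-(m * L)) := by
  obtain ⟨hadj, hout⟩ := (mem_filter.1 hp).2
  have hdist : (L : ℝ) ≤ G.dist x0 p.1 := by
    exact_mod_cast le_dist_of_adj_of_notMem_zball G hfin hconn hadj hout
  have hL1 : (1 : ℝ) ≤ L := by exact_mod_cast hL
  refine (hNS.2 _ _ ((Real.rpow_le_self_of_one_le hL1 (by norm_num)).trans hdist)).trans ?_
  have ht : (0 : ℝ) ≤ (L : ℝ) ^ (-(1/8 : ℝ)) := by positivity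
  rw [Real.exp_le_exp]
  nlinarith [mul_nonneg (mul_nonneg hm ht) (zero_le_one.trans (hL1.trans hdist))]

theorem IsNS.mul_abs_le_sum_boundaryEdges (hconn : G.Connected) (hL : 1 ≤ L) (hm : 0 ≤ m)
    (hNS : IsNS G hfin V Cd d (3/2) (1/8) (1/6) x0 L E m) {Λ : Finset Z}
    (hsub : zball G hfin x0 L ⊆ Λ) (hx : x0 ∈ Λ) {ψ : Λ → ℝ} (hψ : Ham G V Λ *ᵥ ψ = E • ψ) :
    Cd ^ 2 * (L : ℝ) ^ d * |ψ ⟨x0, hx⟩| ≤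
      Real.exp (-(m * L)) * ∑ p ∈ boundaryEdges G (zball G hfin x0 L) Λ, |ψ p.2| := by
  rw [apply_eq_sum_boundaryEdges_green_mul G hsub hNS.1 hψ ⟨x0, self_mem_zball G hfin x0 L⟩,
    mul_sum]
  calc _ ≤ Cd ^ 2 * (L : ℝ) ^ d * ∑ p ∈ boundaryEdges G (zball G hfin x0 L) Λ,
        |green (Ham G V (zball G hfin x0 L)) E ⟨x0, self_mem_zball G hfin x0 L⟩ p.1| * |ψ p.2| := by
        gcongr
        exact (abs_sum_le_sum_abs _ _).trans_eq (sum_congr rfl fun p _ => abs_mul _ _)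
    _ ≤ _ := by
        rw [mul_sum]
        refine sum_le_sum fun p hp => ?_
        rw [← mul_assoc]
        gcongr
        exact hNS.mul_abs_green_le_of_mem_boundaryEdges G hfin hconn hL hm hp

end Nonsingular

section Correlator

variable {Z : Type*} [DecidableEq Z] (G : SimpleGraph Z) [DecidableRel G.Adj]
  [∀ v : Z, Fintype (G.neighborSet v)] (hfin : ∀ (x : Z) (r : ℕ), {y : Z | G.dist x y ≤ r}.Finite)
  {V : Z → ℝ} {Cd : ℝ} {d L : ℕ} {m : ℝ}

theorem sum_abs_eigenvectorBasis_mul_le_exp (hconn : G.Connected) (hCd : 0 < Cd)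
    (hdeg : ∀ v, (G.degree v : ℝ) ≤ Cd) (hL : 1 ≤ L) (hm : 0 ≤ m) {x0 : Z}
    (hball : (#(zball G hfin x0 L) : ℝ) ≤ Cd * L ^ d) {Λ : Finset Z}
    (hsub : zball G hfin x0 L ⊆ Λ) (hx : x0 ∈ Λ) (A : Finset Λ)
    (hA : ∀ k ∈ A,
      IsNS G hfin V Cd d (3/2) (1/8) (1/6) x0 L ((Ham_isHermitian G V Λ).eigenvalues k) m)
    (j : Λ) :
    ∑ k ∈ A, |(Ham_isHermitian G V Λ).eigenvectorBasis k ⟨x0, hx⟩| *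
        |(Ham_isHermitian G V Λ).eigenvectorBasis k j| ≤ Real.exp (-(m * L)) := by
  set hH := Ham_isHermitian G V Λ
  have hL0 : (0 : ℝ) < L := by exact_mod_cast hL
  have hvol : 0 < Cd ^ 2 * (L : ℝ) ^ d := by positivity
  have hcard : (#(boundaryEdges G (zball G hfin x0 L) Λ) : ℝ) ≤ Cd ^ 2 * (L : ℝ) ^ d :=
    calc _ ≤ #(zball G hfin x0 L) * Cd := card_boundaryEdges_le G _ Λ hdeg
      _ ≤ Cd * L ^ d * Cd := by gcongr
      _ = Cd ^ 2 * L ^ d := by ring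
  have key := hH.mul_sum_abs_eigenvectorBasis_mul_le A _ Prod.snd (Real.exp_pos _).le
    ⟨x0, hx⟩ j fun k hk => (hA k hk).mul_abs_le_sum_boundaryEdges G hfin hconn hL hm hsub hx
      (hH.mulVec_eigenvectorBasis k)
  refine le_of_mul_le_mul_left (key.trans ?_) hvol
  rw [mul_comm]
  exact mul_le_mul_of_nonneg_right hcard (Real.exp_pos _).le

theorem norm_matFun_le_two_mul_exp (hconn : G.Connected) (hCd : 0 < Cd)
    (hdeg : ∀ v, (G.degree v : ℝ) ≤ Cd) (hL : 1 ≤ L) (hm : 0 ≤ m)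
    (hball : ∀ z, (#(zball G hfin z L) : ℝ) ≤ Cd * L ^ d) {Λ : Finset Z} {x y : Z}
    (hsubx : zball G hfin x L ⊆ Λ) (hsuby : zball G hfin y L ⊆ Λ) (hx : x ∈ Λ) (hy : y ∈ Λ)
    {I : Set ℝ} {φ : ℝ → ℂ} (hφ1 : ∀ t, ‖φ t‖ ≤ 1) (hφI : ∀ t, t ∉ I → φ t = 0)
    (hNS : ∀ E ∈ I, IsNS G hfin V Cd d (3/2) (1/8) (1/6) x L E m ∨
      IsNS G hfin V Cd d (3/2) (1/8) (1/6) y L E m) :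
    ‖matFun (Ham G V Λ) (Ham_isHermitian G V Λ) φ ⟨x, hx⟩ ⟨y, hy⟩‖ ≤
      2 * Real.exp (-(m * L)) := by
  classical
  set hH := Ham_isHermitian G V Λ
  refine (hH.norm_matFun_le φ I hφ1 hφI _ _).trans ?_
  rw [← sum_filter_add_sum_filter_not _
    fun k => IsNS G hfin V Cd d (3/2) (1/8) (1/6) x L (hH.eigenvalues k) m, two_mul]
  refine add_le_add ?_ ?_
  · exact sum_abs_eigenvectorBasis_mul_le_exp G hfin hconn hCd hdeg hL hm (hball x) hsubx hx _
      (fun k hk => (mem_filter.1 hk).2) _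
  · simp_rw [mul_comm |hH.eigenvectorBasis _ ⟨x, hx⟩|]
    refine sum_abs_eigenvectorBasis_mul_le_exp G hfin hconn hCd hdeg hL hm (hball y) hsuby hy _
      (fun k hk => ?_) _
    obtain ⟨hkI, hkx⟩ := mem_filter.1 hk
    exact (hNS _ (mem_filter.1 hkI).2).resolve_left hkx

end Correlator

theorem MeasureTheory.lintegral_ofReal_le_add_measure {Ω : Type*} [MeasurableSpace Ω]
    (μ : Measure Ω) [IsProbabilityMeasure μ] {f : Ω → ℝ} {S : Set Ω} {a : ℝ}
    (hf : ∀ ω, f ω ≤ 1) (hS : ∀ ω ∉ S, f ω ≤ a) :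
    ∫⁻ ω, ENNReal.ofReal (f ω) ∂μ ≤ ENNReal.ofReal a + μ S := by
  have hpt (ω : Ω) : ENNReal.ofReal (f ω) ≤ ENNReal.ofReal a + S.indicator 1 ω := by
    by_cases hω : ω ∈ S
    · rw [Set.indicator_of_mem hω, Pi.one_apply]
      exact (ENNReal.ofReal_le_one.2 (hf ω)).trans le_add_self
    · rw [Set.indicator_of_notMem hω, add_zero]
      exact ENNReal.ofReal_le_ofReal (hS ω hω)
  calc _ ≤ ∫⁻ ω, ENNReal.ofReal a + S.indicator 1 ω ∂μ := lintegral_mono hpt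
    _ ≤ ENNReal.ofReal a + μ S := by
      rw [lintegral_add_left measurable_const, lintegral_const, measure_univ, mul_one]
      gcongr
      exact lintegral_indicator_one_le S

theorem statement11 {Z : Type*} [DecidableEq Z] (G : SimpleGraph Z) [DecidableRel G.Adj]
    [∀ v : Z, Fintype (G.neighborSet v)]
    (hconn : G.Connected) (hcount : Countable Z)
    (hfin : ∀ (x : Z) (r : ℕ), {y : Z | G.dist x y ≤ r}.Finite)
    (d : ℕ) (hd : 1 ≤ d) (Cd : ℝ) (hCd : 1 ≤ Cd)
    (hball : ∀ (x : Z) (r : ℕ), 1 ≤ r → ((zball G hfin x r).card : ℝ) ≤ Cd * (r : ℝ) ^ d)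
    (hdeg : ∀ v : Z, (G.degree v : ℝ) ≤ Cd)
    {Ω : Type*} [MeasurableSpace Ω] (Pr : Measure Ω) [IsProbabilityMeasure Pr]
    (V : Z → Ω → ℝ)
    (L : ℕ) (hL : 1 ≤ L) (m : ℝ) (hm : 0 < m) (I : Set ℝ) (ζ : ℝ) (hζ : 0 < ζ)
    -- variable-energy two-volume bound: for every pair of disjoint balls, the probability
    -- that for some `E ∈ I` both balls are `(E,m)`-singular is at most `ζ(L)`
    (hprob : ∀ x y : Z, Disjoint (zball G hfin x L) (zball G hfin y L) →
      Pr {ω | ∃ E ∈ I,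
          ¬ IsNS G hfin (fun z => V z ω) Cd d (3/2) (1/8) (1/6) x L E m ∧
          ¬ IsNS G hfin (fun z => V z ω) Cd d (3/2) (1/8) (1/6) y L E m} ≤
        ENNReal.ofReal ζ)
    (x y : Z) (hxy : 2 * L + 1 < G.dist x y)
    -- a finite connected subgraph `𝒢 ⊇ B_L(x) ∪ B_L(y)`
    (Λ : Finset Z) (hconnΛ : (G.induce (↑Λ : Set Z)).Connected)
    (hcontain : zball G hfin x L ∪ zball G hfin y L ⊆ Λ)
    (hxΛ : x ∈ Λ) (hyΛ : y ∈ Λ)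
    -- a Borel function with `|φ| ≤ 1` supported in `I`
    (φ : ℝ → ℂ) (hφmeas : Measurable φ) (hφ1 : ∀ t : ℝ, ‖φ t‖ ≤ 1)
    (hφI : ∀ t : ℝ, t ∉ I → φ t = 0) :
    ∫⁻ ω, ENNReal.ofReal
        ‖matFun (Ham G (fun z => V z ω) Λ) (Ham_isHermitian G (fun z => V z ω) Λ) φ
          ⟨x, hxΛ⟩ ⟨y, hyΛ⟩‖ ∂Pr ≤
      ENNReal.ofReal (4 * Real.exp (-(m * (L : ℝ))) + ζ) := by
  have hbad := hprob x y (disjoint_zball_of_add_lt_dist G hfin hconn (by omega))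
  refine (lintegral_ofReal_le_add_measure Pr (a := 2 * Real.exp (-(m * L))) ?_ ?_).trans
    ((add_le_add le_rfl hbad).trans ?_)
  · exact fun ω => (Ham_isHermitian G _ Λ).norm_matFun_le_one φ hφ1 _ _
  · exact fun ω hω => norm_matFun_le_two_mul_exp G hfin hconn (by linarith) hdeg hL hm.le
      (fun z => hball z L hL) (union_subset_left hcontain) (union_subset_right hcontain)
      hxΛ hyΛ hφ1 hφI fun E hE => by_contra fun h => hω ⟨E, hE, not_or.1 h⟩
  · rw [← ENNReal.ofReal_add (by positivity) hζ.le]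
    exact ENNReal.ofReal_le_ofReal (by linarith [Real.exp_pos (-(m * L))])
end

section
/- Fix the parameters α = 4/3, δ = 1/4, σ = 1/3 (so σ > δ and σ(α−1) = 1/9), E ∈ ℝ, m > 0, and let L_{j+1} = ⌈L_j^α⌉. There exists L* (depending only on d, C_d and these parameters) such that the following holds whenever L_j ≥ L*. Let B_{L_{j+1}}(u) be a ball and suppose ℙ(B_{L_j}(x) is (E,m)-S) ≤ exp(−L_j^δ) for every ball B_{L_j}(x) ⊆ B_{L_{j+1}}(u). Let 𝒩(ω) be the maximal cardinality of a collection of pairwise disjoint (E,m)-singular balls B_{L_j}(x_i) ⊆ B_{L_{j+1}}(u). Then ℙ(𝒩 ≥ L_j^{σ(α−1)}) ≤ (1/2)·exp(−L_{j+1}^{δ}). -/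
/-!
Statement 12: probabilistic bound on the number of disjoint singular balls
(Lemma `prob.Poisson` in the paper), with parameters `α = 4/3`, `δ = 1/4`, `σ = 1/3`
(so `σ(α-1) = 1/9`), `τ = 1/8`, `ϱ = 1/3`.
-/

open Finset

open MeasureTheory

/-!
Disjoint singular balls are independent and each is singular with probability at most
`exp(-L^(1/4))`, `L = L_j`. A family of `n ≥ L^(1/9)` of them inside `B_{L_{j+1}}(u)` is one of at
most `|B_{L_{j+1}}(u)|^n ≤ (C_d L_{j+1}^d)^n` candidate families, so the union bound gives
`(C_d L_{j+1}^d e^{-L^(1/4)})^n ≤ exp(-L^(13/36) + O(L^(1/9) log L))`, which is below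
`(1/2) exp(-L_{j+1}^(1/4)) ≈ (1/2) exp(-L^(1/3))` for large `L` because `13/36 > 1/3`.
-/

open Real

lemma measure_exists_pairwise_subset_le {ι Ω : Type*} [MeasurableSpace Ω] (μ : Measure Ω)
    (r : ι → ι → Prop) (S : ι → Set Ω) (B : Finset ι) (n : ℕ) (c : ENNReal)
    (hindep : ∀ T ⊆ B, (T : Set ι).Pairwise r → μ (⋂ x ∈ (T : Set ι), S x) = ∏ x ∈ T, μ (S x))
    (hS : ∀ x ∈ B, μ (S x) ≤ c) :
    μ {ω | ∃ T ⊆ B, n ≤ #T ∧ (T : Set ι).Pairwise r ∧ ∀ x ∈ T, ω ∈ S x} ≤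
      (#B).choose n * c ^ n := by
  classical
  set 𝒯 := (B.powersetCard n).filter fun T : Finset ι => (T : Set ι).Pairwise r
  have hcover : {ω | ∃ T ⊆ B, n ≤ #T ∧ (T : Set ι).Pairwise r ∧ ∀ x ∈ T, ω ∈ S x} ⊆
      ⋃ T ∈ 𝒯, ⋂ x ∈ (T : Set ι), S x := by
    rintro ω ⟨T, hTB, hnT, hTr, hωT⟩
    obtain ⟨T', hT'T, hT'n⟩ := exists_subset_card_eq hnT
    refine Set.mem_iUnion₂.mpr ⟨T', ?_, Set.mem_iInter₂.mpr fun x hx => hωT x (hT'T hx)⟩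
    exact mem_filter.mpr ⟨mem_powersetCard.mpr ⟨hT'T.trans hTB, hT'n⟩, hTr.mono hT'T⟩
  have hterm : ∀ T ∈ 𝒯, μ (⋂ x ∈ (T : Set ι), S x) ≤ c ^ n := by
    intro T hT
    obtain ⟨hTB, hTn⟩ := mem_powersetCard.mp (mem_filter.mp hT).1
    rw [hindep T hTB (mem_filter.mp hT).2, ← hTn, ← prod_const]
    exact prod_le_prod' fun x hx => hS x (hTB hx)
  calc _ ≤ μ (⋃ T ∈ 𝒯, ⋂ x ∈ (T : Set ι), S x) := measure_mono hcover
    _ ≤ ∑ T ∈ 𝒯, μ (⋂ x ∈ (T : Set ι), S x) := measure_biUnion_finset_le 𝒯 _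
    _ ≤ #𝒯 * c ^ n := by simpa using sum_le_sum hterm
    _ ≤ (#B).choose n * c ^ n := by
      rw [← card_powersetCard]
      gcongr
      exact filter_subset _ _

lemma rpow_natCast_div_eq_pow {x : ℝ} (hx : 0 ≤ x) (k m : ℕ) :
    x ^ ((k : ℝ) / m) = (x ^ ((1 : ℝ) / m)) ^ k := by
  rw [← rpow_natCast, ← rpow_mul hx]
  ring_nf

lemma pow_mul_exp_neg_pow_le_half_exp_neg {a s t : ℝ} {n : ℕ} (ha : 0 < a)
    (h : t + log 2 ≤ n * (s - log a)) : a ^ n * exp (-s) ^ n ≤ 1 / 2 * exp (-t) := by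
  calc a ^ n * exp (-s) ^ n = exp (n * (log a - s)) := by
        rw [← mul_pow, exp_nat_mul, exp_sub, exp_log ha, exp_neg, div_eq_mul_inv]
    _ ≤ exp (-(t + log 2)) := exp_le_exp.mpr (by linarith)
    _ = 1 / 2 * exp (-t) := by
        rw [neg_add, exp_add, exp_neg (log 2), exp_log two_pos]
        ring

lemma add_one_le_mul_pow_nine_sub {K y n ℓ t : ℝ} (hK : 3 ≤ K) (hy : K ≤ y) (hn : y ^ 4 ≤ n)
    (hℓ : ℓ ≤ (K - 3) * y) (ht : t ≤ 2 * y ^ 12) : t + 1 ≤ n * (y ^ 9 - ℓ) := by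
  have hy1 : 1 ≤ y := by linarith
  have hy5 : y ^ 5 ≤ y ^ 12 := pow_le_pow_right₀ hy1 (by norm_num)
  have hy12 : 1 ≤ y ^ 12 := one_le_pow₀ hy1
  have hy4 : 0 ≤ y ^ 4 := by positivity
  have hy9 : (K - 3) * y ≤ y ^ 9 := by nlinarith [pow_le_pow_right₀ hy1 (show 2 ≤ 9 by norm_num)]
  have hgap : y ^ 13 - (K - 3) * y ^ 5 ≤ n * (y ^ 9 - ℓ) := by
    calc y ^ 13 - (K - 3) * y ^ 5 = y ^ 4 * (y ^ 9 - (K - 3) * y) := by ring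
      _ ≤ n * (y ^ 9 - ℓ) := by gcongr; linarith
  have hlead : K * y ^ 12 ≤ y ^ 13 := by nlinarith
  nlinarith

lemma log_mul_pow_le_mul {C M y : ℝ} (hC : 1 ≤ C) (hM : 1 ≤ M) (hy : 1 ≤ y) {d k : ℕ}
    (hMy : M ≤ y ^ k) : log (C * M ^ d) ≤ (log C + k * d) * y := by
  have hlogM : log M ≤ k * y := by
    calc log M ≤ log (y ^ k) := log_le_log (by linarith) hMy
      _ = k * log y := Real.log_pow y k
      _ ≤ k * y := by gcongr; linarith [log_le_sub_one_of_pos (by linarith : 0 < y)]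
  have hlogC : log C ≤ log C * y := le_mul_of_one_le_right (log_nonneg hC) hy
  rw [log_mul (by linarith) (by positivity), log_pow]
  nlinarith [(Nat.cast_nonneg d : (0 : ℝ) ≤ d)]

lemma pow_mul_exp_neg_rpow_le_of_large {Cd : ℝ} (hCd : 1 ≤ Cd) (d : ℕ) {L N : ℝ} {n : ℕ}
    (hL : (log Cd + 72 * d + 3) ^ 36 ≤ L) (hn : L ^ ((1 : ℝ) / 9) ≤ n) (hN0 : 0 ≤ N)
    (hN : N ≤ Cd * (⌈L ^ ((4 : ℝ) / 3)⌉₊ : ℝ) ^ d) :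
    N ^ n * exp (-L ^ ((1 : ℝ) / 4)) ^ n ≤
      1 / 2 * exp (-(⌈L ^ ((4 : ℝ) / 3)⌉₊ : ℝ) ^ ((1 : ℝ) / 4)) := by
  set K := log Cd + 72 * d + 3
  have hK : 3 ≤ K := by linarith [log_nonneg hCd, (Nat.cast_nonneg d : (0 : ℝ) ≤ d)]
  have hL0 : 0 ≤ L := le_trans (by positivity) hL
  -- With `L = y^36` all exponents become natural: `L^(1/9) = y^4`, `L^(1/4) = y^9`,
  -- `L_{j+1} ≤ 2y^48 ≤ y^72`, and the gain `y^13` beats the volume factor and `L_{j+1}^(1/4)`.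
  obtain ⟨y, hy_def⟩ : ∃ y, L ^ ((1 : ℝ) / 36) = y := ⟨_, rfl⟩
  have hpow (k : ℕ) : L ^ ((k : ℝ) / 36) = y ^ k := by
    rw [← hy_def]
    exact_mod_cast rpow_natCast_div_eq_pow hL0 k 36
  have hy : K ≤ y := by
    rw [← hy_def, one_div, le_rpow_inv_iff_of_pos (by linarith) hL0 (by norm_num)]
    exact_mod_cast hL
  have hy1 : 1 ≤ y := by linarith
  have h43 : L ^ ((4 : ℝ) / 3) = y ^ 48 := by rw [← hpow]; norm_num
  obtain ⟨M, hM_def⟩ : ∃ M : ℕ, ⌈L ^ ((4 : ℝ) / 3)⌉₊ = M := ⟨_, rfl⟩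
  rw [hM_def] at hN ⊢
  have hM : (M : ℝ) ≤ 2 * y ^ 48 := by
    rw [← hM_def, ← h43]
    exact (Nat.ceil_lt_two_mul (by rw [h43]; linarith [one_le_pow₀ (n := 48) hy1])).le
  have hM1 : (1 : ℝ) ≤ M := by
    rw [← hM_def, h43]
    exact_mod_cast Nat.one_le_ceil_iff.mpr (by positivity)
  have hMy : (M : ℝ) ≤ y ^ 72 := by
    calc (M : ℝ) ≤ 2 * y ^ 48 := hM
      _ ≤ y ^ 24 * y ^ 48 := by gcongr; linarith [le_self_pow₀ hy1 (show 24 ≠ 0 by norm_num)]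
      _ = y ^ 72 := by ring
  have hMq : (M : ℝ) ^ ((1 : ℝ) / 4) ≤ 2 * y ^ 12 := by
    rw [one_div, rpow_inv_le_iff_of_pos (by linarith) (by positivity) (by norm_num)]
    calc (M : ℝ) ≤ 2 * y ^ 48 := hM
      _ ≤ 16 * y ^ 48 := by gcongr; norm_num
      _ = (2 * y ^ 12) ^ (4 : ℝ) := by norm_cast; ring
  have hn' : y ^ 4 ≤ n := by rwa [show (1 : ℝ) / 9 = (4 : ℕ) / 36 by norm_num, hpow] at hn
  have hL4 : L ^ ((1 : ℝ) / 4) = y ^ 9 := by rw [← hpow]; norm_num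
  have hlog : log (Cd * M ^ d) ≤ (K - 3) * y := by
    have := log_mul_pow_le_mul hCd hM1 hy1 (d := d) hMy
    push_cast at this
    linarith
  calc N ^ n * exp (-L ^ ((1 : ℝ) / 4)) ^ n
        ≤ (Cd * M ^ d) ^ n * exp (-L ^ ((1 : ℝ) / 4)) ^ n := by gcongr
    _ ≤ 1 / 2 * exp (-(M : ℝ) ^ ((1 : ℝ) / 4)) := by
        refine pow_mul_exp_neg_pow_le_half_exp_neg (by positivity) ?_
        rw [hL4]
        linarith [add_one_le_mul_pow_nine_sub hK hy hn' hlog hMq, log_two_lt_d9]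

theorem statement12_general (d : ℕ) (Cd : ℝ) (hCd : 1 ≤ Cd) :
    ∃ Lstar : ℕ,
      ∀ (Z : Type) [DecidableEq Z] (G : SimpleGraph Z) [DecidableRel G.Adj]
        [∀ v : Z, Fintype (G.neighborSet v)],
      G.Connected → Countable Z →
      ∀ (hfin : ∀ (x : Z) (r : ℕ), {y : Z | G.dist x y ≤ r}.Finite),
      (∀ (x : Z) (r : ℕ), 1 ≤ r → ((zball G hfin x r).card : ℝ) ≤ Cd * (r : ℝ) ^ d) →
      ∀ (Ω : Type) [MeasurableSpace Ω] (Pr : Measure Ω) [IsProbabilityMeasure Pr]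
        (V : Z → Ω → ℝ) (E m : ℝ), 0 < m →
      ∀ (u : Z) (Lj Lj1 : ℕ), Lstar ≤ Lj → Lj1 = ⌈(Lj : ℝ) ^ ((4 : ℝ) / 3)⌉₊ →
      -- the events `{B_{L_j}(x) is (E,m)-S}` are independent for pairwise disjoint balls
      (∀ T : Finset Z,
        ((T : Set Z).Pairwise fun x y => Disjoint (zball G hfin x Lj) (zball G hfin y Lj)) →
        Pr (⋂ x ∈ (T : Set Z),
            {ω | ¬ IsNS G hfin (fun z => V z ω) Cd d (4/3) (1/8) (1/3) x Lj E m}) =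
          ∏ x ∈ T,
            Pr {ω | ¬ IsNS G hfin (fun z => V z ω) Cd d (4/3) (1/8) (1/3) x Lj E m}) →
      -- each ball `B_{L_j}(x) ⊆ B_{L_{j+1}}(u)` is `(E,m)`-singular with probability
      -- at most `exp(-L_j^δ)`
      (∀ x : Z, zball G hfin x Lj ⊆ zball G hfin u Lj1 →
        Pr {ω | ¬ IsNS G hfin (fun z => V z ω) Cd d (4/3) (1/8) (1/3) x Lj E m} ≤
          ENNReal.ofReal (Real.exp (-(Lj : ℝ) ^ ((1 : ℝ) / 4)))) →
      -- conclusion: `Pr(𝒩 ≥ L_j^{σ(α-1)}) ≤ (1/2) exp(-L_{j+1}^δ)`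
      Pr {ω | ∃ T : Finset Z,
          ((Lj : ℝ) ^ ((1 : ℝ) / 9) ≤ (T.card : ℝ)) ∧
          (∀ x ∈ T, zball G hfin x Lj ⊆ zball G hfin u Lj1 ∧
            ¬ IsNS G hfin (fun z => V z ω) Cd d (4/3) (1/8) (1/3) x Lj E m) ∧
          ((T : Set Z).Pairwise fun x y =>
            Disjoint (zball G hfin x Lj) (zball G hfin y Lj))} ≤
        ENNReal.ofReal ((1 / 2) * Real.exp (-(Lj1 : ℝ) ^ ((1 : ℝ) / 4))) := by
  classical
  refine ⟨⌈(log Cd + 72 * d + 3) ^ 36⌉₊, ?_⟩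
  intro Z _ G _ _ _ _ hfin hcard Ω _ Pr _ V E m _ u Lj Lj1 hLj hLj1_def hindep hsing
  set S : Z → Set Ω := fun x =>
    {ω | ¬ IsNS G hfin (fun z => V z ω) Cd d (4/3) (1/8) (1/3) x Lj E m}
  set B := (zball G hfin u Lj1).filter fun x => zball G hfin x Lj ⊆ zball G hfin u Lj1
  set n := ⌈(Lj : ℝ) ^ ((1 : ℝ) / 9)⌉₊
  have hLj : (log Cd + 72 * d + 3) ^ 36 ≤ (Lj : ℝ) := Nat.ceil_le.mp hLj
  have hLj1 : 1 ≤ Lj1 := by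
    have hK : 0 < log Cd + 72 * d + 3 := by linarith [log_nonneg hCd, d.cast_nonneg (α := ℝ)]
    exact hLj1_def ▸ Nat.one_le_ceil_iff.mpr (rpow_pos_of_pos (hLj.trans_lt' (by positivity)) _)
  have hvol : (#B : ℝ) ≤ Cd * (Lj1 : ℝ) ^ d :=
    (Nat.cast_le.mpr (card_filter_le _ _)).trans (hcard u Lj1 hLj1)
  calc _ ≤ Pr {ω | ∃ T ⊆ B, n ≤ #T ∧
          ((T : Set Z).Pairwise fun x y => Disjoint (zball G hfin x Lj) (zball G hfin y Lj)) ∧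
          ∀ x ∈ T, ω ∈ S x} := by
        refine measure_mono ?_
        rintro ω ⟨T, hTn, hTS, hTr⟩
        exact ⟨T, fun x hx => mem_filter.mpr ⟨(hTS x hx).1 (self_mem_zball G hfin x Lj),
          (hTS x hx).1⟩, Nat.ceil_le.mpr hTn, hTr, fun x hx => (hTS x hx).2⟩
    _ ≤ (#B).choose n * ENNReal.ofReal (exp (-(Lj : ℝ) ^ ((1 : ℝ) / 4))) ^ n :=
        measure_exists_pairwise_subset_le Pr _ S B n _ (fun T _ => hindep T)
          fun x hx => hsing x (mem_filter.mp hx).2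
    _ ≤ ENNReal.ofReal ((#B : ℝ) ^ n * exp (-(Lj : ℝ) ^ ((1 : ℝ) / 4)) ^ n) := by
        rw [ENNReal.ofReal_mul (by positivity), ENNReal.ofReal_pow (exp_nonneg _), ← Nat.cast_pow,
          ENNReal.ofReal_natCast]
        gcongr
        exact_mod_cast Nat.choose_le_pow _ _
    _ ≤ _ := ENNReal.ofReal_le_ofReal (by
        rw [hLj1_def] at hvol ⊢
        exact pow_mul_exp_neg_rpow_le_of_large hCd d hLj (Nat.le_ceil _) (Nat.cast_nonneg _) hvol)

theorem statement12 (d : ℕ) (hd : 1 ≤ d) (Cd : ℝ) (hCd : 1 ≤ Cd) :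
    ∃ Lstar : ℕ,
      ∀ (Z : Type) [DecidableEq Z] (G : SimpleGraph Z) [DecidableRel G.Adj]
        [∀ v : Z, Fintype (G.neighborSet v)],
      G.Connected → Countable Z →
      ∀ (hfin : ∀ (x : Z) (r : ℕ), {y : Z | G.dist x y ≤ r}.Finite),
      (∀ (x : Z) (r : ℕ), 1 ≤ r → ((zball G hfin x r).card : ℝ) ≤ Cd * (r : ℝ) ^ d) →
      ∀ (Ω : Type) [MeasurableSpace Ω] (Pr : Measure Ω) [IsProbabilityMeasure Pr]
        (V : Z → Ω → ℝ) (E m : ℝ), 0 < m →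
      ∀ (u : Z) (Lj Lj1 : ℕ), Lstar ≤ Lj → Lj1 = ⌈(Lj : ℝ) ^ ((4 : ℝ) / 3)⌉₊ →
      -- the events `{B_{L_j}(x) is (E,m)-S}` are independent for pairwise disjoint balls
      (∀ T : Finset Z,
        ((T : Set Z).Pairwise fun x y => Disjoint (zball G hfin x Lj) (zball G hfin y Lj)) →
        Pr (⋂ x ∈ (T : Set Z),
            {ω | ¬ IsNS G hfin (fun z => V z ω) Cd d (4/3) (1/8) (1/3) x Lj E m}) =
          ∏ x ∈ T,
            Pr {ω | ¬ IsNS G hfin (fun z => V z ω) Cd d (4/3) (1/8) (1/3) x Lj E m}) →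
      -- each ball `B_{L_j}(x) ⊆ B_{L_{j+1}}(u)` is `(E,m)`-singular with probability
      -- at most `exp(-L_j^δ)`
      (∀ x : Z, zball G hfin x Lj ⊆ zball G hfin u Lj1 →
        Pr {ω | ¬ IsNS G hfin (fun z => V z ω) Cd d (4/3) (1/8) (1/3) x Lj E m} ≤
          ENNReal.ofReal (Real.exp (-(Lj : ℝ) ^ ((1 : ℝ) / 4)))) →
      -- conclusion: `Pr(𝒩 ≥ L_j^{σ(α-1)}) ≤ (1/2) exp(-L_{j+1}^δ)`
      Pr {ω | ∃ T : Finset Z,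
          ((Lj : ℝ) ^ ((1 : ℝ) / 9) ≤ (T.card : ℝ)) ∧
          (∀ x ∈ T, zball G hfin x Lj ⊆ zball G hfin u Lj1 ∧
            ¬ IsNS G hfin (fun z => V z ω) Cd d (4/3) (1/8) (1/3) x Lj E m) ∧
          ((T : Set Z).Pairwise fun x y =>
            Disjoint (zball G hfin x Lj) (zball G hfin y Lj))} ≤
        ENNReal.ofReal ((1 / 2) * Real.exp (-(Lj1 : ℝ) ^ ((1 : ℝ) / 4))) :=
  statement12_general d Cd hCd
end
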